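/- arXiv:1110.0401 — 10 statements merged into one kernel-verified Lean document; each statement's English description precedes it below -/
import Mathlib

section
/- For every a > 0, the integral of (1/(1-x^2)) * log((1 + a^2 x^2)/(1 + a^2)) over x in (0, ∞), multiplied by -1/π, equals arctan(a). (The integrand has an integrable singularity at x = 1; the integral is understood as an improper/principal value, which converges absolutely since the logarithm vanishes at x = 1.) -/
/-!
Feynman's trick. Differentiating in the parameter gives
`log ((1 + a²x²)/(1 + a²)) = (x² - 1) ∫₀ᵃ 2b / ((1 + b²x²)(1 + b²)) db`, which also removes the
apparent singularity at `x = 1`. The kernel is nonnegative for `b > 0`, so the order of integration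
may be swapped; for fixed `b` the kernel has antiderivative `2 arctan(bx) / (1 + b²)` in `x`, so
its integral over `(0, ∞)` is `π / (1 + b²)`, and integrating that over `(0, a)` gives `π arctan a`.
-/

open Real MeasureTheory Set Filter Topology

noncomputable def feynmanKernel (b x : ℝ) : ℝ := 2 * b / ((1 + b ^ 2 * x ^ 2) * (1 + b ^ 2))

lemma continuous_feynmanKernel : Continuous (Function.uncurry feynmanKernel) :=
  Continuous.div (by fun_prop) (by fun_prop) fun p => by positivity

lemma feynmanKernel_nonneg {b : ℝ} (hb : 0 ≤ b) (x : ℝ) : 0 ≤ feynmanKernel b x := by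
  unfold feynmanKernel; positivity

lemma hasDerivAt_log_sub_log (x b : ℝ) :
    HasDerivAt (fun b => log (1 + b ^ 2 * x ^ 2) - log (1 + b ^ 2))
      ((x ^ 2 - 1) * feynmanKernel b x) b := by
  have hx : HasDerivAt (fun b : ℝ => 1 + b ^ 2 * x ^ 2) (2 * b * x ^ 2) b := by
    simpa using ((hasDerivAt_pow 2 b).mul_const (x ^ 2)).const_add 1
  have h1 : HasDerivAt (fun b : ℝ => 1 + b ^ 2) (2 * b) b := by
    simpa using (hasDerivAt_pow 2 b).const_add 1
  refine ((hx.log (by positivity)).sub (h1.log (by positivity))).congr_deriv ?_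
  unfold feynmanKernel
  field_simp
  ring

lemma mul_intervalIntegral_feynmanKernel (a x : ℝ) :
    (x ^ 2 - 1) * ∫ b in 0..a, feynmanKernel b x = log ((1 + a ^ 2 * x ^ 2) / (1 + a ^ 2)) := by
  rw [← intervalIntegral.integral_const_mul,
    intervalIntegral.integral_eq_sub_of_hasDerivAt (fun b _ => hasDerivAt_log_sub_log x b)
      ((continuous_const.mul (continuous_feynmanKernel.comp
        (continuous_id.prodMk continuous_const))).intervalIntegrable _ _),
    log_div (by positivity) (by positivity)]
  simp

lemma one_div_one_sub_sq_mul_log_eq {x : ℝ} (hx : x ^ 2 ≠ 1) (a : ℝ) :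
    1 / (1 - x ^ 2) * log ((1 + a ^ 2 * x ^ 2) / (1 + a ^ 2)) = -∫ b in 0..a, feynmanKernel b x := by
  have hx' : 1 - x ^ 2 ≠ 0 := sub_ne_zero.2 hx.symm
  rw [← mul_intervalIntegral_feynmanKernel]
  field_simp
  ring

lemma integral_Ioi_feynmanKernel {b : ℝ} (hb : 0 < b) :
    IntegrableOn (feynmanKernel b) (Ioi 0) ∧ ∫ x in Ioi 0, feynmanKernel b x = π / (1 + b ^ 2) := by
  have hderiv : ∀ x ∈ Ici (0 : ℝ),
      HasDerivAt (fun x => 2 / (1 + b ^ 2) * arctan (b * x)) (feynmanKernel b x) x := by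
    intro x _
    refine ((((hasDerivAt_id x).const_mul b).arctan).const_mul (2 / (1 + b ^ 2))).congr_deriv ?_
    unfold feynmanKernel
    field_simp
    simp
  have hnonneg : ∀ x ∈ Ioi (0 : ℝ), 0 ≤ feynmanKernel b x := fun x _ =>
    feynmanKernel_nonneg hb.le x
  have hlim : Tendsto (fun x => 2 / (1 + b ^ 2) * arctan (b * x)) atTop
      (𝓝 (2 / (1 + b ^ 2) * (π / 2))) :=
    ((tendsto_arctan_atTop.mono_right nhdsWithin_le_nhds).comp
      (tendsto_id.const_mul_atTop hb)).const_mul _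
  refine ⟨integrableOn_Ioi_deriv_of_nonneg' hderiv hnonneg hlim, ?_⟩
  rw [integral_Ioi_of_hasDerivAt_of_nonneg' hderiv hnonneg hlim]
  simp only [mul_zero, arctan_zero]
  ring

lemma integrable_feynmanKernel_prod {a : ℝ} (ha : 0 ≤ a) :
    Integrable (Function.uncurry feynmanKernel)
      ((volume.restrict (uIoc 0 a)).prod (volume.restrict (Ioi 0))) := by
  have hpos : ∀ᵐ b ∂volume.restrict (uIoc 0 a), 0 < b := by
    rw [uIoc_of_le ha]
    filter_upwards [ae_restrict_mem measurableSet_Ioc] with b hb using hb.1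
  refine (integrable_prod_iff continuous_feynmanKernel.aestronglyMeasurable).2
    ⟨hpos.mono fun b hb => (integral_Ioi_feynmanKernel hb).1, ?_⟩
  refine ((continuous_const.div (by fun_prop) fun b => by positivity).integrableOn_uIoc
    (f := fun b : ℝ => π / (1 + b ^ 2))).congr ?_
  filter_upwards [hpos] with b hb
  simp only [Function.uncurry_apply_pair, Real.norm_of_nonneg (feynmanKernel_nonneg hb.le _)]
  exact (integral_Ioi_feynmanKernel hb).2.symm

lemma integral_Ioi_intervalIntegral_feynmanKernel {a : ℝ} (ha : 0 ≤ a) :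
    ∫ x in Ioi 0, ∫ b in 0..a, feynmanKernel b x = π * arctan a := by
  rw [← intervalIntegral_integral_swap (integrable_feynmanKernel_prod ha)]
  calc ∫ b in 0..a, ∫ x in Ioi 0, feynmanKernel b x
      = ∫ b in 0..a, π * (1 / (1 + b ^ 2)) := by
        refine intervalIntegral.integral_congr_ae (ae_of_all _ fun b hb => ?_)
        rw [uIoc_of_le ha] at hb
        rw [(integral_Ioi_feynmanKernel hb.1).2, mul_one_div]
    _ = π * arctan a := by
        rw [intervalIntegral.integral_const_mul, integral_one_div_one_add_sq, arctan_zero, sub_zero]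

theorem stmt0 (a : ℝ) (ha : 0 < a) :
    -(1/π) * ∫ x in Set.Ioi (0:ℝ),
        (1/(1 - x^2)) * Real.log ((1 + a^2*x^2)/(1 + a^2)) = Real.arctan a := by
  have hsq : ∀ᵐ x ∂volume.restrict (Ioi (0 : ℝ)), x ^ 2 ≠ 1 := by
    filter_upwards [ae_restrict_mem measurableSet_Ioi,
      ae_restrict_of_ae (Measure.ae_ne volume 1)] with x hpos hne
    rwa [Ne, pow_eq_one_iff_of_nonneg hpos.le two_ne_zero]
  rw [integral_congr_ae (hsq.mono fun x hx => one_div_one_sub_sq_mul_log_eq hx a), integral_neg,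
    integral_Ioi_intervalIntegral_feynmanKernel ha.le]
  field_simp
end

section
/- For every b ∈ (0,1), the integral of (1/(1-x^2)) * log(1 - b^2(1-x^2)) over x in (0,1), multiplied by -1/π, equals (arcsin b)^2 / π. -/
/-! Write `log (1 - b²c) / c = -2 ∫₀ᵇ t / (1 - t²c) dt` with `c = 1 - x²` and swap the
order of integration. For fixed `t ∈ (-1, 1)`, `1 - t²(1 - x²) = (1 - t²) + t²x²`, so the
`x`-integral over `(0, 1)` is an arctangent, namely `arcsin t / √(1 - t²)`.
This is the derivative of `arcsin² t / 2`, hence the double integral equals `-arcsin² b`. -/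

open Real MeasureTheory Set

lemma setIntegral_Ioo_eq_intervalIntegral {E : Type*} [NormedAddCommGroup E] [NormedSpace ℝ E]
    {a b : ℝ} (hab : a ≤ b) (f : ℝ → E) : ∫ x in Ioo a b, f x = ∫ x in a..b, f x := by
  rw [intervalIntegral.integral_of_le hab, integral_Ioc_eq_integral_Ioo]

lemma integral_div_one_sub_sq_mul {b c : ℝ} (hc : c ≠ 0) (hbc : b ^ 2 * c < 1) :
    ∫ t in (0 : ℝ)..b, t / (1 - t ^ 2 * c) = -log (1 - b ^ 2 * c) / (2 * c) := by
  have hpos : ∀ t ∈ uIcc 0 b, 0 < 1 - t ^ 2 * c := by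
    intro t ht
    have htb : t ^ 2 ≤ b ^ 2 := by
      rcases mem_uIcc.mp ht with ⟨h0, h1⟩ | ⟨h0, h1⟩ <;> nlinarith
    rcases le_or_gt 0 c with h | h <;> nlinarith [sq_nonneg t]
  have hderiv : ∀ t ∈ uIcc 0 b,
      HasDerivAt (fun t => -log (1 - t ^ 2 * c) / (2 * c)) (t / (1 - t ^ 2 * c)) t := by
    intro t ht
    have hlog := (((hasDerivAt_pow 2 t).mul_const c).const_sub 1).log (hpos t ht).ne'
    refine (hlog.neg.div_const (2 * c)).congr_deriv ?_
    norm_num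
    field_simp
  have hcont : ContinuousOn (fun t => t / (1 - t ^ 2 * c)) (uIcc 0 b) :=
    continuousOn_id.div (by fun_prop) fun t ht => (hpos t ht).ne'
  rw [intervalIntegral.integral_eq_sub_of_hasDerivAt hderiv hcont.intervalIntegrable]
  simp

lemma integral_div_one_sub_sq_mul_one_sub_sq {t : ℝ} (ht : t ∈ Ioo (-1) 1) :
    ∫ x in (0 : ℝ)..1, t / (1 - t ^ 2 * (1 - x ^ 2)) = arcsin t / √(1 - t ^ 2) := by
  rw [arcsin_eq_arctan ht]
  have h1t : 0 < 1 - t ^ 2 := by nlinarith [ht.1, ht.2]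
  set s := √(1 - t ^ 2)
  have hs : 0 < s := sqrt_pos.mpr h1t
  have hden : ∀ x : ℝ, 1 - t ^ 2 * (1 - x ^ 2) = s ^ 2 + t ^ 2 * x ^ 2 := by
    intro x
    rw [sq_sqrt h1t.le]
    ring
  have hderiv : ∀ x ∈ uIcc (0 : ℝ) 1,
      HasDerivAt (fun x => arctan (t / s * x) / s) (t / (1 - t ^ 2 * (1 - x ^ 2))) x := by
    intro x _
    have harctan := ((hasDerivAt_id' x).const_mul (t / s)).arctan
    refine (harctan.div_const s).congr_deriv ?_
    rw [hden x]
    field_simp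
  have hcont : ContinuousOn (fun x : ℝ => t / (1 - t ^ 2 * (1 - x ^ 2))) (uIcc 0 1) :=
    continuousOn_const.div (by fun_prop) fun x _ => by rw [hden x]; positivity
  rw [intervalIntegral.integral_eq_sub_of_hasDerivAt hderiv hcont.intervalIntegrable]
  simp

lemma integral_arcsin_div_sqrt_one_sub_sq {b : ℝ} (hb : b ∈ Ioo (-1) 1) :
    ∫ t in (0 : ℝ)..b, arcsin t / √(1 - t ^ 2) = arcsin b ^ 2 / 2 := by
  have hsub : uIcc 0 b ⊆ Ioo (-1) 1 :=
    ordConnected_Ioo.uIcc_subset (by norm_num) hb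
  have hderiv : ∀ t ∈ uIcc 0 b,
      HasDerivAt (fun t => arcsin t ^ 2 / 2) (arcsin t / √(1 - t ^ 2)) t := by
    intro t ht
    obtain ⟨ht0, ht1⟩ := hsub ht
    refine (((hasDerivAt_arcsin ht0.ne' ht1.ne).pow 2).div_const 2).congr_deriv ?_
    norm_num
    field_simp
  have hcont : ContinuousOn (fun t => arcsin t / √(1 - t ^ 2)) (uIcc 0 b) := by
    refine continuous_arcsin.continuousOn.div (by fun_prop) fun t ht => ?_
    obtain ⟨ht0, ht1⟩ := hsub ht
    exact (sqrt_pos.mpr (by nlinarith)).ne'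
  rw [intervalIntegral.integral_eq_sub_of_hasDerivAt hderiv hcont.intervalIntegrable]
  simp

lemma integrableOn_div_one_sub_sq_mul_one_sub_sq {b : ℝ} (hb : b < 1) :
    IntegrableOn (Function.uncurry fun x t : ℝ => t / (1 - t ^ 2 * (1 - x ^ 2)))
      (Icc 0 1 ×ˢ Icc 0 b) := by
  refine ContinuousOn.integrableOn_compact (isCompact_Icc.prod isCompact_Icc) ?_
  refine continuousOn_snd.div (by fun_prop) ?_
  rintro ⟨x, t⟩ ⟨⟨hx0, hx1⟩, ⟨ht0, htb⟩⟩
  have : t ^ 2 * (1 - x ^ 2) ≤ t ^ 2 := by nlinarith [sq_nonneg t, sq_nonneg x]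
  exact (by nlinarith : (0 : ℝ) < 1 - t ^ 2 * (1 - x ^ 2)).ne'

theorem stmt1 (b : ℝ) (hb : b ∈ Set.Ioo (0:ℝ) 1) :
    -(1/π) * ∫ x in Set.Ioo (0:ℝ) 1,
        (1/(1 - x^2)) * Real.log (1 - b^2*(1 - x^2)) = (Real.arcsin b)^2 / π := by
  obtain ⟨hb0, hb1⟩ := hb
  set K : ℝ → ℝ → ℝ := fun x t => t / (1 - t ^ 2 * (1 - x ^ 2))
  have inner_t : ∀ x ∈ Ioo (0 : ℝ) 1,
      1 / (1 - x ^ 2) * log (1 - b ^ 2 * (1 - x ^ 2)) = -2 * ∫ t in Ioo 0 b, K x t := by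
    rintro x ⟨hx0, hx1⟩
    have hc : 0 < 1 - x ^ 2 := by nlinarith
    rw [setIntegral_Ioo_eq_intervalIntegral hb0.le,
      integral_div_one_sub_sq_mul hc.ne' (by nlinarith)]
    field_simp
  have inner_x : ∀ t ∈ Ioo 0 b, ∫ x in Ioo 0 1, K x t = arcsin t / √(1 - t ^ 2) := by
    rintro t ⟨ht0, htb⟩
    rw [setIntegral_Ioo_eq_intervalIntegral zero_le_one,
      integral_div_one_sub_sq_mul_one_sub_sq ⟨by linarith, by linarith⟩]
  have hK : Integrable (Function.uncurry K)
      ((volume.restrict (Ioo 0 1)).prod (volume.restrict (Ioo 0 b))) := by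
    rw [Measure.prod_restrict]
    exact (integrableOn_div_one_sub_sq_mul_one_sub_sq hb1).mono_set
      (prod_mono Ioo_subset_Icc_self Ioo_subset_Icc_self)
  calc _ = -(1 / π) * (-2 * ∫ t in Ioo 0 b, ∫ x in Ioo 0 1, K x t) := by
        rw [setIntegral_congr_fun measurableSet_Ioo inner_t, integral_const_mul,
          integral_integral_swap hK]
    _ = -(1 / π) * (-2 * ∫ t in Ioo 0 b, arcsin t / √(1 - t ^ 2)) := by
        rw [setIntegral_congr_fun measurableSet_Ioo inner_x]
    _ = arcsin b ^ 2 / π := by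
        rw [setIntegral_Ioo_eq_intervalIntegral hb0.le,
          integral_arcsin_div_sqrt_one_sub_sq ⟨by linarith, hb1⟩]
        ring
end

section
/- For all b ∈ (0,1), the power series identity ∑_{n≥1} (Γ(n) Γ(1/2) / (2n Γ(n+1/2))) b^{2n} = (arcsin b)^2 holds. -/
/-!
Write `c n = Γ(n+1) Γ(1/2) / Γ(n+3/2)`, so the series is `F x = ∑ c n / (2n+2) x^(2n+2)`, with
`c 0 = 2` and `(2n+3) c (n+1) = (2n+2) c n`. The coefficients decrease, so termwise differentiation
is legitimate on `(-1, 1)`, and the recurrence makes `(1 - x²) F'' - x F' - 2` telescope to zero.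
This ODE says that `√(1 - x²) F'` has derivative `2 / √(1 - x²)`, so `√(1 - x²) F' = 2 arcsin`
(both vanish at `0`); hence `F' = (arcsin²)'` and `F = arcsin²`.
-/

open Real Set Function

lemma norm_mul_natCast_add_one_mul_pow_le {c C x r : ℝ} (hc : |c| ≤ C) (hx : |x| ≤ r) (k : ℕ) :
    ‖c * (k + 1) * x ^ k‖ ≤ C * ((k + 1) * r ^ k) := by
  rw [norm_mul, norm_mul, norm_pow, norm_eq_abs, norm_eq_abs, norm_eq_abs,
    abs_of_nonneg (by positivity : (0 : ℝ) ≤ k + 1), ← mul_assoc]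
  have hC : 0 ≤ C := (abs_nonneg c).trans hc
  gcongr

section LacunarySeries

variable {ι : Type*} {e : ι → ℕ}

lemma summable_natCast_add_one_mul_pow_comp (he : Injective e) {r : ℝ} (hr₀ : 0 ≤ r)
    (hr : r < 1) : Summable fun i => ((e i : ℝ) + 1) * r ^ e i := by
  have hr' : ‖r‖ < 1 := by rwa [norm_of_nonneg hr₀]
  have h := (summable_pow_mul_geometric_of_norm_lt_one 1 hr').add
    (summable_geometric_of_lt_one hr₀ hr)
  refine (h.comp_injective he).congr fun i => ?_
  simp only [comp_apply, pow_one]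
  ring

variable {a : ι → ℝ} {C : ℝ}

lemma summable_mul_natCast_add_one_mul_pow (ha : ∀ i, |a i| ≤ C) (he : Injective e) {x : ℝ}
    (hx : |x| < 1) : Summable fun i => a i * (e i + 1) * x ^ e i :=
  .of_norm_bounded ((summable_natCast_add_one_mul_pow_comp he (abs_nonneg x) hx).mul_left C)
    fun i => norm_mul_natCast_add_one_mul_pow_le (ha i) le_rfl (e i)

lemma hasDerivAt_tsum_mul_pow_succ (ha : ∀ i, |a i| ≤ C) (he : Injective e) {x : ℝ}
    (hx : |x| < 1) :
    HasDerivAt (fun y => ∑' i, a i * y ^ (e i + 1)) (∑' i, a i * (e i + 1) * x ^ e i) x := by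
  obtain ⟨r, hxr, hr⟩ := exists_between hx
  have hr₀ : 0 ≤ r := (abs_nonneg x).trans hxr.le
  refine hasDerivAt_tsum_of_isPreconnected (g := fun i y => a i * y ^ (e i + 1))
    (g' := fun i y => a i * (e i + 1) * y ^ e i)
    ((summable_natCast_add_one_mul_pow_comp he hr₀ hr).mul_left C) isOpen_Ioo isPreconnected_Ioo
    (fun i y _ => ?_) (fun i y hy => ?_) (y₀ := 0) ?_ ?_ (abs_lt.mp hxr)
  · simpa [mul_assoc] using (hasDerivAt_pow (e i + 1) y).const_mul (a i)
  · exact norm_mul_natCast_add_one_mul_pow_le (ha i) (abs_lt.mpr hy).le (e i)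
  · simpa using (abs_nonneg x).trans_lt hxr
  · simp

end LacunarySeries

lemma injective_two_mul_add (k : ℕ) : Injective fun n : ℕ => 2 * n + k :=
  fun m n h => by simp only at h; omega

lemma IsOpen.eqOn_of_hasDerivAt {s : Set ℝ} (hs : IsOpen s) (hs' : IsPreconnected s)
    {f g f' : ℝ → ℝ} (hf : ∀ x ∈ s, HasDerivAt f (f' x) x) (hg : ∀ x ∈ s, HasDerivAt g (f' x) x)
    {x₀ : ℝ} (hx₀ : x₀ ∈ s) (h : f x₀ = g x₀) : EqOn f g s :=
  hs.eqOn_of_deriv_eq hs' (fun x hx => (hf x hx).differentiableAt.differentiableWithinAt)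
    (fun x hx => (hg x hx).differentiableAt.differentiableWithinAt)
    (fun x hx => (hf x hx).deriv.trans (hg x hx).deriv.symm) hx₀ h

noncomputable def arcsinSqCoeff (n : ℕ) : ℝ :=
  Gamma ((n : ℝ) + 1) * Gamma (1 / 2) / Gamma ((n : ℝ) + 1 + 1 / 2)

lemma arcsinSqCoeff_pos (n : ℕ) : 0 < arcsinSqCoeff n := by
  have := Gamma_pos_of_pos (s := 1 / 2) (by norm_num)
  have := Gamma_pos_of_pos (s := (n : ℝ) + 1) (by positivity)
  have := Gamma_pos_of_pos (s := (n : ℝ) + 1 + 1 / 2) (by positivity)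
  unfold arcsinSqCoeff
  positivity

lemma arcsinSqCoeff_zero : arcsinSqCoeff 0 = 2 := by
  have := (Gamma_pos_of_pos (s := 1 / 2) (by norm_num)).ne'
  rw [arcsinSqCoeff, Nat.cast_zero, zero_add, Gamma_one, add_comm, Gamma_add_one (by norm_num)]
  field_simp

lemma arcsinSqCoeff_succ (n : ℕ) :
    (2 * n + 3) * arcsinSqCoeff (n + 1) = (2 * n + 2) * arcsinSqCoeff n := by
  have : Gamma ((n : ℝ) + 1 + 1 / 2) ≠ 0 := (Gamma_pos_of_pos (by positivity)).ne'
  have h₁ : Gamma ((n : ℝ) + 1 + 1) = (n + 1) * Gamma (n + 1) := Gamma_add_one (by positivity)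
  have h₂ : Gamma ((n : ℝ) + 1 + 1 + 1 / 2) = (n + 1 + 1 / 2) * Gamma (n + 1 + 1 / 2) := by
    rw [add_right_comm _ 1, Gamma_add_one (by positivity)]
  rw [arcsinSqCoeff, arcsinSqCoeff, Nat.cast_succ, h₁, h₂]
  field_simp
  ring

lemma arcsinSqCoeff_antitone : Antitone arcsinSqCoeff := by
  refine antitone_nat_of_succ_le fun n => ?_
  nlinarith [arcsinSqCoeff_succ n, arcsinSqCoeff_pos n, arcsinSqCoeff_pos (n + 1)]

lemma abs_arcsinSqCoeff_le_two (n : ℕ) : |arcsinSqCoeff n| ≤ 2 := by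
  rw [abs_of_pos (arcsinSqCoeff_pos n), ← arcsinSqCoeff_zero]
  exact arcsinSqCoeff_antitone (Nat.zero_le n)

lemma abs_arcsinSqCoeff_div_le_two (n : ℕ) : |arcsinSqCoeff n / (2 * (n + 1))| ≤ 2 := by
  rw [abs_div, abs_of_pos (by positivity : (0 : ℝ) < 2 * (n + 1))]
  exact (div_le_self (abs_nonneg _) (by linarith [n.cast_nonneg (α := ℝ)])).trans
    (abs_arcsinSqCoeff_le_two n)

noncomputable def arcsinSqSeries (x : ℝ) : ℝ :=
  ∑' n : ℕ, arcsinSqCoeff n / (2 * (n + 1)) * x ^ (2 * (n + 1))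

noncomputable def arcsinSqSeriesDeriv (x : ℝ) : ℝ :=
  ∑' n : ℕ, arcsinSqCoeff n * x ^ (2 * n + 1)

lemma hasDerivAt_arcsinSqSeries {x : ℝ} (hx : |x| < 1) :
    HasDerivAt arcsinSqSeries (arcsinSqSeriesDeriv x) x :=
  (hasDerivAt_tsum_mul_pow_succ abs_arcsinSqCoeff_div_le_two (injective_two_mul_add 1)
    hx).congr_deriv <| tsum_congr fun n => by
      field_simp
      push_cast
      ring

lemma hasDerivAt_arcsinSqSeriesDeriv {x : ℝ} (hx : |x| < 1) :
    HasDerivAt arcsinSqSeriesDeriv (∑' n : ℕ, arcsinSqCoeff n * (2 * n + 1) * x ^ (2 * n)) x :=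
  (hasDerivAt_tsum_mul_pow_succ abs_arcsinSqCoeff_le_two (injective_two_mul_add 0)
    hx).congr_deriv <| tsum_congr fun n => by
      push_cast
      ring

lemma one_sub_sq_mul_tsum_sub_mul_arcsinSqSeriesDeriv {x : ℝ} (hx : |x| < 1) :
    (1 - x ^ 2) * (∑' n : ℕ, arcsinSqCoeff n * (2 * n + 1) * x ^ (2 * n))
      - x * arcsinSqSeriesDeriv x = 2 := by
  set d : ℕ → ℝ := fun n => arcsinSqCoeff n * (2 * n + 1) * x ^ (2 * n)
  have hd : Summable d := by
    simpa using summable_mul_natCast_add_one_mul_pow abs_arcsinSqCoeff_le_two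
      (injective_two_mul_add 0) hx
  have hd' : Summable fun n => d (n + 1) := (summable_nat_add_iff 1).mpr hd
  have hterm (n : ℕ) :
      (1 - x ^ 2) * d n - x * (arcsinSqCoeff n * x ^ (2 * n + 1)) = d n - d (n + 1) := by
    simp only [d]
    push_cast
    linear_combination x ^ (2 * n + 2) * arcsinSqCoeff_succ n
  have hg : Summable fun n => x * (arcsinSqCoeff n * x ^ (2 * n + 1)) :=
    ((hd.mul_left (1 - x ^ 2)).sub (hd.sub hd')).congr fun n => by linarith [hterm n]
  calc (1 - x ^ 2) * ∑' n, d n - x * arcsinSqSeriesDeriv x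
      = ∑' n, ((1 - x ^ 2) * d n - x * (arcsinSqCoeff n * x ^ (2 * n + 1))) := by
        rw [arcsinSqSeriesDeriv, ← tsum_mul_left, ← tsum_mul_left, (hd.mul_left _).tsum_sub hg]
    _ = ∑' n, (d n - d (n + 1)) := tsum_congr hterm
    _ = d 0 := by rw [hd.tsum_sub hd', hd.tsum_eq_zero_add]; ring
    _ = 2 := by simp [d, arcsinSqCoeff_zero]

lemma sqrt_one_sub_sq_mul_arcsinSqSeriesDeriv_eqOn :
    EqOn (fun x => √(1 - x ^ 2) * arcsinSqSeriesDeriv x) (fun x => 2 * arcsin x) (Ioo (-1) 1) := by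
  refine isOpen_Ioo.eqOn_of_hasDerivAt isPreconnected_Ioo (f' := fun x => 2 / √(1 - x ^ 2))
    (fun x hx => ?_) (fun x hx => ?_) (x₀ := 0) (by simp) (by simp [arcsinSqSeriesDeriv])
  · have hx' : |x| < 1 := abs_lt.mpr hx
    have h1 : 0 < 1 - x ^ 2 := by nlinarith [hx.1, hx.2]
    have hsqrt : HasDerivAt (fun y => √(1 - y ^ 2)) (-x / √(1 - x ^ 2)) x := by
      convert ((hasDerivAt_pow 2 x).const_sub 1).sqrt h1.ne' using 1
      ring
    refine (hsqrt.fun_mul (hasDerivAt_arcsinSqSeriesDeriv hx')).congr_deriv ?_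
    have hs : 0 < √(1 - x ^ 2) := sqrt_pos.mpr h1
    field_simp
    rw [sq_sqrt h1.le]
    linear_combination one_sub_sq_mul_tsum_sub_mul_arcsinSqSeriesDeriv hx'
  · exact ((hasDerivAt_arcsin hx.1.ne' hx.2.ne).const_mul 2).congr_deriv (mul_one_div 2 _)

lemma arcsinSqSeries_eqOn : EqOn arcsinSqSeries (fun x => arcsin x ^ 2) (Ioo (-1) 1) := by
  refine isOpen_Ioo.eqOn_of_hasDerivAt isPreconnected_Ioo (f' := arcsinSqSeriesDeriv)
    (fun x hx => hasDerivAt_arcsinSqSeries (abs_lt.mpr hx)) (fun x hx => ?_) (x₀ := 0) (by simp)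
    (by simp [arcsinSqSeries])
  have h1 : 0 < √(1 - x ^ 2) := sqrt_pos.mpr (by nlinarith [hx.1, hx.2])
  refine ((hasDerivAt_arcsin hx.1.ne' hx.2.ne).fun_pow 2).congr_deriv ?_
  have hG : arcsinSqSeriesDeriv x * √(1 - x ^ 2) = 2 * arcsin x :=
    (mul_comm _ _).trans (sqrt_one_sub_sq_mul_arcsinSqSeriesDeriv_eqOn hx)
  rw [eq_div_of_mul_eq h1.ne' hG]
  push_cast
  ring

theorem stmt2 (b : ℝ) (hb : b ∈ Set.Ioo (0:ℝ) 1) :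
    ∑' n : ℕ, (Real.Gamma ((n:ℝ)+1) * Real.Gamma (1/2) /
        (2*((n:ℝ)+1) * Real.Gamma ((n:ℝ)+1+1/2))) * b^(2*(n+1))
      = (Real.arcsin b)^2 := by
  rw [← arcsinSqSeries_eqOn.eq_of_mem (Ioo_subset_Ioo_left (by norm_num) hb), arcsinSqSeries]
  refine tsum_congr fun n => ?_
  rw [arcsinSqCoeff, div_div, mul_comm (Gamma ((n : ℝ) + 1 + 1 / 2))]
end

section
/- Let a > 0 and c ≥ 1, and let f : (0,∞) → [0,∞) be measurable with f(x) ≤ c · f(a) · max(1, x/a) for all x > 0. Then for every ξ > 0, f(a) ≥ ξ (Lf)(ξ) / (c (1 + (aξ)^{-1} e^{-aξ})), where (Lf)(ξ) = ∫_0^∞ e^{-ξx} f(x) dx. -/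
/-!
The bound `f x ≤ c f(a) max(1, x/a)` dominates the Laplace integrand by `c f(a)` times
`e^{-ξx} max(1, x/a)`, whose integral over `(0, ∞)` is elementary: splitting at `a` gives
`(1 - e^{-aξ})/ξ + (1/ξ + 1/(aξ²)) e^{-aξ} = (1 + (aξ)⁻¹ e^{-aξ})/ξ`. Monotonicity of the integral
then yields `ξ (Lf)(ξ) ≤ c f(a) (1 + (aξ)⁻¹ e^{-aξ})`.
-/

open Real MeasureTheory Set Filter Topology

section LaplaceIntegrals

variable {ξ : ℝ}

lemma integral_Ioc_exp_neg_mul (hξ : 0 < ξ) {a : ℝ} (ha : 0 ≤ a) :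
    ∫ x in Ioc 0 a, exp (-ξ * x) = (1 - exp (-ξ * a)) / ξ := by
  have hint : ∀ b, IntegrableOn (fun x => exp (-ξ * x)) (Ioi b) :=
    integrableOn_exp_mul_Ioi (neg_lt_zero.2 hξ)
  have hsplit := setIntegral_union (Ioc_disjoint_Ioi le_rfl) measurableSet_Ioi
    ((hint 0).mono_set Ioc_subset_Ioi_self) (hint a)
  rw [Ioc_union_Ioi_eq_Ioi ha, integral_exp_mul_Ioi (neg_lt_zero.2 hξ),
    integral_exp_mul_Ioi (neg_lt_zero.2 hξ)] at hsplit
  rw [eq_sub_of_add_eq hsplit.symm, mul_zero, exp_zero]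
  field_simp

lemma hasDerivAt_antideriv_mul_exp_neg_mul (hξ : 0 < ξ) (x : ℝ) :
    HasDerivAt (fun x => -(x / ξ + 1 / ξ ^ 2) * exp (-ξ * x)) (x * exp (-ξ * x)) x := by
  have hpoly : HasDerivAt (fun x => -(x / ξ + 1 / ξ ^ 2)) (-(1 / ξ)) x :=
    (((hasDerivAt_id' x).div_const ξ).add_const _).neg
  refine (hpoly.mul ((hasDerivAt_id' x).const_mul (-ξ)).exp).congr_deriv ?_
  field_simp
  ring

lemma tendsto_antideriv_mul_exp_neg_mul_atTop (hξ : 0 < ξ) :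
    Tendsto (fun x => -(x / ξ + 1 / ξ ^ 2) * exp (-ξ * x)) atTop (𝓝 0) := by
  have hlin : Tendsto (fun x => ξ * x) atTop atTop := tendsto_id.const_mul_atTop hξ
  have hpow := (tendsto_pow_mul_exp_neg_atTop_nhds_zero 1).comp hlin
  have hexp := tendsto_exp_neg_atTop_nhds_zero.comp hlin
  convert ((hpow.const_mul (1 / ξ ^ 2)).add (hexp.const_mul (1 / ξ ^ 2))).neg using 2 with x
  · simp only [Function.comp, pow_one, neg_mul]
    field_simp
  · simp

lemma integrableOn_Ioi_mul_exp_neg_mul (hξ : 0 < ξ) {a : ℝ} (ha : 0 ≤ a) :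
    IntegrableOn (fun x => x * exp (-ξ * x)) (Ioi a) :=
  integrableOn_Ioi_deriv_of_nonneg' (fun x _ => hasDerivAt_antideriv_mul_exp_neg_mul hξ x)
    (fun _ hx => mul_nonneg (ha.trans hx.out.le) (exp_pos _).le)
    (tendsto_antideriv_mul_exp_neg_mul_atTop hξ)

lemma integral_Ioi_mul_exp_neg_mul (hξ : 0 < ξ) {a : ℝ} (ha : 0 ≤ a) :
    ∫ x in Ioi a, x * exp (-ξ * x) = (a / ξ + 1 / ξ ^ 2) * exp (-ξ * a) := by
  rw [integral_Ioi_of_hasDerivAt_of_nonneg' (fun x _ => hasDerivAt_antideriv_mul_exp_neg_mul hξ x)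
    (fun x hx => mul_nonneg (ha.trans hx.out.le) (exp_pos _).le)
    (tendsto_antideriv_mul_exp_neg_mul_atTop hξ)]
  ring

end LaplaceIntegrals

section MaxKernel

variable {a ξ : ℝ}

lemma integrableOn_exp_neg_mul_max_one_div (hξ : 0 < ξ) (ha : 0 < a) :
    IntegrableOn (fun x => exp (-ξ * x) * max 1 (x / a)) (Ioi 0) := by
  have hcont : Continuous fun x => exp (-ξ * x) * max 1 (x / a) := by fun_prop
  rw [← Ioc_union_Ioi_eq_Ioi ha.le]
  refine hcont.integrableOn_Ioc.union ?_
  refine IntegrableOn.congr_fun ((integrableOn_Ioi_mul_exp_neg_mul hξ ha.le).div_const a)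
    (fun x hx => ?_) measurableSet_Ioi
  rw [max_eq_right ((one_le_div ha).2 hx.out.le)]
  ring

lemma integral_exp_neg_mul_max_one_div (hξ : 0 < ξ) (ha : 0 < a) :
    ∫ x in Ioi 0, exp (-ξ * x) * max 1 (x / a) = (1 + (a * ξ)⁻¹ * exp (-(a * ξ))) / ξ := by
  have hint := integrableOn_exp_neg_mul_max_one_div hξ ha
  rw [← Ioc_union_Ioi_eq_Ioi ha.le, setIntegral_union (Ioc_disjoint_Ioi le_rfl) measurableSet_Ioi
    (hint.mono_set Ioc_subset_Ioi_self) (hint.mono_set (Ioi_subset_Ioi ha.le))]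
  have hnear : ∫ x in Ioc 0 a, exp (-ξ * x) * max 1 (x / a) = ∫ x in Ioc 0 a, exp (-ξ * x) := by
    refine setIntegral_congr_fun measurableSet_Ioc fun x hx => ?_
    rw [max_eq_left ((div_le_one ha).2 hx.2), mul_one]
  have hfar : ∫ x in Ioi a, exp (-ξ * x) * max 1 (x / a)
      = (∫ x in Ioi a, x * exp (-ξ * x)) / a := by
    rw [← integral_div]
    refine setIntegral_congr_fun measurableSet_Ioi fun x hx => ?_
    rw [max_eq_right ((one_le_div ha).2 hx.out.le)]
    ring
  rw [hnear, hfar, integral_Ioc_exp_neg_mul hξ ha.le, integral_Ioi_mul_exp_neg_mul hξ ha.le,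
    neg_mul, mul_comm ξ a]
  field_simp
  ring

end MaxKernel

theorem stmt3_general (a c ξ : ℝ) (ha : 0 < a) (hc : 1 ≤ c) (hξ : 0 < ξ)
    (f : ℝ → ℝ)
    (hnonneg : ∀ x > 0, 0 ≤ f x)
    (hbound : ∀ x > 0, f x ≤ c * f a * max 1 (x/a)) :
    ξ * (∫ x in Set.Ioi (0:ℝ), Real.exp (-ξ*x) * f x) /
        (c * (1 + (a*ξ)⁻¹ * Real.exp (-(a*ξ)))) ≤ f a := by
  have hc0 : 0 < c := one_pos.trans_le hc
  have hlaplace : ∫ x in Ioi 0, exp (-ξ * x) * f x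
      ≤ c * f a * ((1 + (a * ξ)⁻¹ * exp (-(a * ξ))) / ξ) := by
    rw [← integral_exp_neg_mul_max_one_div hξ ha, ← integral_const_mul]
    refine setIntegral_mono_of_nonneg (fun x hx => mul_nonneg (exp_pos _).le (hnonneg x hx))
      (fun x hx => ?_) ((integrableOn_exp_neg_mul_max_one_div hξ ha).const_mul _)
    calc exp (-ξ * x) * f x ≤ exp (-ξ * x) * (c * f a * max 1 (x / a)) := by
          gcongr; exact hbound x hx
      _ = c * f a * (exp (-ξ * x) * max 1 (x / a)) := by ring
  rw [div_le_iff₀ (by positivity)]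
  calc ξ * ∫ x in Ioi 0, exp (-ξ * x) * f x
      ≤ ξ * (c * f a * ((1 + (a * ξ)⁻¹ * exp (-(a * ξ))) / ξ)) := by gcongr
    _ = f a * (c * (1 + (a * ξ)⁻¹ * exp (-(a * ξ)))) := by field_simp

theorem stmt3 (a c ξ : ℝ) (ha : 0 < a) (hc : 1 ≤ c) (hξ : 0 < ξ)
    (f : ℝ → ℝ) (hmeas : Measurable f)
    (hnonneg : ∀ x > 0, 0 ≤ f x)
    (hbound : ∀ x > 0, f x ≤ c * f a * max 1 (x/a)) :
    ξ * (∫ x in Set.Ioi (0:ℝ), Real.exp (-ξ*x) * f x) /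
        (c * (1 + (a*ξ)⁻¹ * Real.exp (-(a*ξ)))) ≤ f a :=
  stmt3_general a c ξ ha hc hξ f hnonneg hbound
end

section
/- Let b ≥ a > 0 and m ≥ 0. Suppose f : (0,∞) → [0,∞) is nonnegative, nondecreasing on (0,b), and f(x) ≥ m for all x ≥ b, with finite Laplace transform Lf(ξ) = ∫_0^∞ e^{-ξx} f(x) dx. Then for every ξ > 0, f(a) ≤ (e^{aξ} ξ Lf(ξ) − m e^{−(b−a)ξ}) / (1 − e^{−(b−a)ξ}), provided b > a. -/
/-!
Discard the part of the Laplace integral over `(0, a)` and bound `f` from below by `f a` on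
`[a, b)` (monotonicity) and by `m` on `[b, ∞)`. This gives
`ξ Lf(ξ) ≥ f(a) (e^{-aξ} - e^{-bξ}) + m e^{-bξ}`, and multiplying by `e^{aξ}` and solving for
`f a` is the claim.
-/

open Real MeasureTheory Set

lemma integral_Ioi_exp_neg_mul {ξ : ℝ} (hξ : 0 < ξ) (c : ℝ) :
    ∫ x in Ioi c, exp (-ξ * x) = exp (-ξ * c) / ξ := by
  rw [integral_exp_mul_Ioi (neg_lt_zero.2 hξ), neg_div_neg_eq]

lemma setIntegral_Ici_eq_Ico_add_Ici {g : ℝ → ℝ} {a b : ℝ} (hab : a ≤ b)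
    (hg : IntegrableOn g (Ici a)) :
    ∫ x in Ici a, g x = (∫ x in Ico a b, g x) + ∫ x in Ici b, g x := by
  rw [← setIntegral_union ((Iio_disjoint_Ici le_rfl).mono_left Ico_subset_Iio_self)
    measurableSet_Ici (hg.mono_set Ico_subset_Ici_self) (hg.mono_set (Ici_subset_Ici.2 hab)),
    Ico_union_Ici_eq_Ici hab]

lemma integral_Ico_exp_neg_mul {ξ : ℝ} (hξ : 0 < ξ) {a b : ℝ} (hab : a ≤ b) :
    ∫ x in Ico a b, exp (-ξ * x) = (exp (-ξ * a) - exp (-ξ * b)) / ξ := by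
  have hsplit := setIntegral_Ici_eq_Ico_add_Ici hab
    ((exp_neg_integrableOn_Ioi a hξ).congr_set_ae Ioi_ae_eq_Ici.symm)
  rw [integral_Ici_eq_integral_Ioi, integral_Ici_eq_integral_Ioi, integral_Ioi_exp_neg_mul hξ,
    integral_Ioi_exp_neg_mul hξ] at hsplit
  rw [sub_div, hsplit, add_sub_cancel_right]

lemma laplace_lower_bound {f : ℝ → ℝ} {a b m ξ : ℝ} (ha : 0 < a) (hab : a ≤ b) (hξ : 0 < ξ)
    (hnonneg : ∀ x ∈ Ioi 0, 0 ≤ f x) (hfa : ∀ x ∈ Ico a b, f a ≤ f x)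
    (hfm : ∀ x ∈ Ici b, m ≤ f x)
    (hint : IntegrableOn (fun x => exp (-ξ * x) * f x) (Ioi 0)) :
    f a * (exp (-ξ * a) - exp (-ξ * b)) + m * exp (-ξ * b)
      ≤ ξ * ∫ x in Ioi 0, exp (-ξ * x) * f x := by
  have hsub : Ici a ⊆ Ioi 0 := Ici_subset_Ioi.2 ha
  have hint_a : IntegrableOn (fun x => exp (-ξ * x) * f x) (Ici a) := hint.mono_set hsub
  have hexp : IntegrableOn (fun x => exp (-ξ * x)) (Ici a) :=
    (exp_neg_integrableOn_Ioi a hξ).congr_set_ae Ioi_ae_eq_Ici.symm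
  calc f a * (exp (-ξ * a) - exp (-ξ * b)) + m * exp (-ξ * b)
      = ξ * ((∫ x in Ico a b, f a * exp (-ξ * x)) + ∫ x in Ici b, m * exp (-ξ * x)) := by
        rw [integral_const_mul, integral_const_mul, integral_Ico_exp_neg_mul hξ hab,
          integral_Ici_eq_integral_Ioi, integral_Ioi_exp_neg_mul hξ]
        field_simp
    _ ≤ ξ * ((∫ x in Ico a b, exp (-ξ * x) * f x) + ∫ x in Ici b, exp (-ξ * x) * f x) := by
        gcongr ξ * ?_
        refine add_le_add ?_ ?_
        · exact setIntegral_mono_on ((hexp.mono_set Ico_subset_Ici_self).const_mul _)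
            (hint_a.mono_set Ico_subset_Ici_self) measurableSet_Ico fun x hx => by
              rw [mul_comm]; exact mul_le_mul_of_nonneg_left (hfa x hx) (exp_nonneg _)
        · exact setIntegral_mono_on ((hexp.mono_set (Ici_subset_Ici.2 hab)).const_mul _)
            (hint_a.mono_set (Ici_subset_Ici.2 hab)) measurableSet_Ici fun x hx => by
              rw [mul_comm]; exact mul_le_mul_of_nonneg_left (hfm x hx) (exp_nonneg _)
    _ = ξ * ∫ x in Ici a, exp (-ξ * x) * f x := by
        rw [setIntegral_Ici_eq_Ico_add_Ici hab hint_a]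
    _ ≤ ξ * ∫ x in Ioi 0, exp (-ξ * x) * f x := by
        gcongr ξ * ?_
        refine setIntegral_mono_set hint ?_ (Filter.Eventually.of_forall hsub)
        filter_upwards [ae_restrict_mem measurableSet_Ioi] with x hx
        exact mul_nonneg (exp_nonneg _) (hnonneg x hx)

theorem stmt5_general (a b m : ℝ) (ha : 0 < a) (hab : a < b)
    (f : ℝ → ℝ) (hnonneg : ∀ x > 0, 0 ≤ f x)
    (hmono : MonotoneOn f (Set.Ioo 0 b))
    (hlb : ∀ x, b ≤ x → m ≤ f x)
    (ξ : ℝ) (hξ : 0 < ξ)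
    (hint : IntegrableOn (fun x => Real.exp (-ξ*x) * f x) (Set.Ioi 0)) :
    f a ≤ (Real.exp (a*ξ) * ξ * (∫ x in Set.Ioi (0:ℝ), Real.exp (-ξ*x) * f x)
        - m * Real.exp (-((b-a)*ξ))) / (1 - Real.exp (-((b-a)*ξ))) := by
  have hbound := laplace_lower_bound ha hab.le hξ hnonneg
    (fun x hx => hmono ⟨ha, hab⟩ ⟨ha.trans_le hx.1, hx.2⟩ hx.1) hlb hint
  have hE : exp (-((b - a) * ξ)) < 1 := exp_lt_one_iff.2 (by nlinarith)
  have h_a : exp (a * ξ) * exp (-ξ * a) = 1 := by rw [← exp_add]; ring_nf; exact exp_zero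
  have h_b : exp (a * ξ) * exp (-ξ * b) = exp (-((b - a) * ξ)) := by rw [← exp_add]; ring_nf
  rw [le_div_iff₀ (sub_pos.2 hE)]
  calc f a * (1 - exp (-((b - a) * ξ)))
      = exp (a * ξ) * (f a * (exp (-ξ * a) - exp (-ξ * b)) + m * exp (-ξ * b))
          - m * exp (-((b - a) * ξ)) := by linear_combination (-f a) * h_a + (f a - m) * h_b
    _ ≤ exp (a * ξ) * ξ * (∫ x in Ioi 0, exp (-ξ * x) * f x) - m * exp (-((b - a) * ξ)) := by
        rw [mul_assoc]; gcongr

theorem stmt5 (a b m : ℝ) (ha : 0 < a) (hab : a < b) (hm : 0 ≤ m)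
    (f : ℝ → ℝ) (hnonneg : ∀ x > 0, 0 ≤ f x)
    (hmono : MonotoneOn f (Set.Ioo 0 b))
    (hlb : ∀ x, b ≤ x → m ≤ f x)
    (ξ : ℝ) (hξ : 0 < ξ)
    (hint : IntegrableOn (fun x => Real.exp (-ξ*x) * f x) (Set.Ioi 0)) :
    f a ≤ (Real.exp (a*ξ) * ξ * (∫ x in Set.Ioi (0:ℝ), Real.exp (-ξ*x) * f x)
        - m * Real.exp (-((b-a)*ξ))) / (1 - Real.exp (-((b-a)*ξ))) :=
  stmt5_general a b m ha hab f hnonneg hmono hlb ξ hξ hint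
end

section
/- Let γ(a; x) = ∫_0^x e^{-s} s^{a-1} ds be the lower incomplete gamma function. Then for all a, x > 0: min(1, x^a)/(a e) ≤ γ(a; x) ≤ min(Γ(a+1), x^a)/a. -/
open Real MeasureTheory

lemma rpow_int_aux (a t : ℝ) (ha : 0 < a) (ht : 0 < t) :
    ∫ s in Set.Ioo (0:ℝ) t, s^(a-1) = t^a / a := by
  rw [← MeasureTheory.integral_Ioc_eq_integral_Ioo,
    ← intervalIntegral.integral_of_le ht.le,
    integral_rpow (Or.inl (by linarith))]
  rw [Real.zero_rpow (by linarith)]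
  ring_nf

lemma rpow_int_int (a t : ℝ) (ha : 0 < a) :
    IntegrableOn (fun s : ℝ => s^(a-1)) (Set.Ioo 0 t) := by
  have := (intervalIntegral.intervalIntegrable_rpow' (a := 0) (b := t) (r := a-1) (by linarith)).1
  exact (this.mono_set Set.Ioo_subset_Ioc_self)

theorem stmt6 (a x : ℝ) (ha : 0 < a) (hx : 0 < x) :
    min 1 (x^a) / (a * Real.exp 1) ≤
      (∫ s in Set.Ioo (0:ℝ) x, Real.exp (-s) * s^(a-1)) ∧
    (∫ s in Set.Ioo (0:ℝ) x, Real.exp (-s) * s^(a-1)) ≤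
      min (Real.Gamma (a+1)) (x^a) / a := by
  set f : ℝ → ℝ := fun s => Real.exp (-s) * s^(a-1) with hf
  have hIntIoi : IntegrableOn f (Set.Ioi 0) := Real.GammaIntegral_convergent ha
  have hIntx : IntegrableOn f (Set.Ioo 0 x) :=
    hIntIoi.mono_set Set.Ioo_subset_Ioi_self
  have hfnn : ∀ s ∈ Set.Ioi (0:ℝ), 0 ≤ f s := fun s hs =>
    mul_nonneg (Real.exp_pos _).le (Real.rpow_nonneg (le_of_lt hs) _)
  constructor
  · -- lower bound
    set y := min x 1 with hy
    have hy0 : 0 < y := lt_min hx one_pos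
    have hyx : y ≤ x := min_le_left _ _
    have hy1 : y ≤ 1 := min_le_right _ _
    have hsub : Set.Ioo (0:ℝ) y ⊆ Set.Ioo 0 x := Set.Ioo_subset_Ioo le_rfl hyx
    have step1 : (∫ s in Set.Ioo (0:ℝ) y, f s) ≤ ∫ s in Set.Ioo (0:ℝ) x, f s := by
      apply setIntegral_mono_set hIntx
      · filter_upwards [ae_restrict_mem measurableSet_Ioo] with s hs
        exact hfnn s hs.1
      · exact Filter.Eventually.of_forall hsub
    have step2 : (∫ s in Set.Ioo (0:ℝ) y, Real.exp (-1) * s^(a-1)) ≤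
        ∫ s in Set.Ioo (0:ℝ) y, f s := by
      apply setIntegral_mono_on
      · exact (rpow_int_int a y ha).const_mul _
      · exact hIntx.mono_set hsub
      · exact measurableSet_Ioo
      · intro s hs
        apply mul_le_mul_of_nonneg_right _ (Real.rpow_nonneg hs.1.le _)
        exact Real.exp_le_exp.2 (by linarith [hs.2.le.trans hy1])
    have step3 : (∫ s in Set.Ioo (0:ℝ) y, Real.exp (-1) * s^(a-1))
        = Real.exp (-1) * (y^a / a) := by
      rw [integral_const_mul, rpow_int_aux a y ha hy0]
    have hya : y^a = min 1 (x^a) := by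
      rcases le_total x 1 with h | h
      · rw [hy, min_eq_left h, min_eq_right (Real.rpow_le_one hx.le h ha.le)]
      · rw [hy, min_eq_right h, Real.one_rpow,
          min_eq_left (Real.one_le_rpow h ha.le)]
    have : min 1 (x^a) / (a * Real.exp 1) = Real.exp (-1) * (y^a / a) := by
      rw [hya, Real.exp_neg, ← div_div]
      exact (inv_mul_eq_div _ _).symm
    rw [this, ← step3]
    exact step2.trans step1
  · -- upper bound
    rw [← min_div_div_right ha.le]
    apply le_min
    · -- ≤ Γ(a+1)/a = Γ a
      have : Real.Gamma (a+1) / a = Real.Gamma a := by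
        rw [Real.Gamma_add_one ha.ne']; field_simp
      rw [this, Real.Gamma_eq_integral ha]
      apply setIntegral_mono_set hIntIoi
      · filter_upwards [ae_restrict_mem measurableSet_Ioi] with s hs using hfnn s hs
      · exact Filter.Eventually.of_forall Set.Ioo_subset_Ioi_self
    · rw [← rpow_int_aux a x ha hx]
      apply setIntegral_mono_on hIntx (rpow_int_int a x ha) measurableSet_Ioo
      intro s hs
      calc f s ≤ 1 * s^(a-1) := by
            apply mul_le_mul_of_nonneg_right _ (Real.rpow_nonneg hs.1.le _)
            exact Real.exp_le_one_iff.mpr (by linarith [hs.1.le])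
        _ = s^(a-1) := one_mul _
end

section
/- For all a, x > 0, ∫_0^x e^{-s} s^{a-1} (x - s)^{-1/2} ds ≤ min(2Γ(a) + π a^a e^{-a}, 2(1/a + 1) x^a) / √(2x). -/
/-! Split the integral at `x / 2`. On `[0, x/2]` the factor `(x - s)^(-1/2)` is at most
`(x/2)^(-1/2)`, and `∫₀^{x/2} e^{-s} s^{a-1} ds` is at most both `Γ(a)` and `(x/2)^a / a`.
On `[x/2, x]`, either bound `e^{-s} s^{a-1}` by a multiple of `s^(-1/2)` (via the maximum
`a^a e^{-a}` of `s^a e^{-s}`, or via `s^(a-1/2) ≤ (x/2)^(a-1/2)` when `a ≤ 1/2`) and use the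
arcsine integral `∫_{x/2}^x (s (x - s))^(-1/2) ds = π/2`, or, when `a ≥ 1/2`, bound it by its
maximum on the interval and integrate `(x - s)^(-1/2)`. The resulting constants are compared
through `2^(-a) (1 + a log 2) ≤ 1`. -/

open Real MeasureTheory Set intervalIntegral

lemma hasDerivAt_neg_two_mul_sqrt_sub {x s : ℝ} (hs : s < x) :
    HasDerivAt (fun t => -2 * √(x - t)) (√(x - s))⁻¹ s := by
  refine ((((hasDerivAt_id' s).const_sub x).sqrt (sub_ne_zero.2 hs.ne')).const_mul
    (-2)).congr_deriv ?_
  have : √(x - s) ≠ 0 := (sqrt_pos.2 (sub_pos.2 hs)).ne'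
  field_simp

lemma intervalIntegrable_inv_sqrt_sub {c x : ℝ} (hcx : c ≤ x) :
    IntervalIntegrable (fun s => (√(x - s))⁻¹) volume c x :=
  (intervalIntegrable_iff_integrableOn_Ioc_of_le hcx).2 <|
    integrableOn_deriv_of_nonneg (by fun_prop)
      (fun _ hs => hasDerivAt_neg_two_mul_sqrt_sub hs.2) fun _ _ => by positivity

lemma integral_inv_sqrt_sub {c x : ℝ} (hcx : c ≤ x) :
    ∫ s in c..x, (√(x - s))⁻¹ = 2 * √(x - c) := by
  rw [integral_eq_sub_of_hasDerivAt_of_le hcx (by fun_prop)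
    (fun _ hs => hasDerivAt_neg_two_mul_sqrt_sub hs.2) (intervalIntegrable_inv_sqrt_sub hcx)]
  simp

lemma hasDerivAt_arcsin_two_mul_div_sub_one {x s : ℝ} (hs : s ∈ Ioo 0 x) :
    HasDerivAt (fun t => arcsin (2 * t / x - 1)) (√s * √(x - s))⁻¹ s := by
  obtain ⟨hs0, hsx⟩ := hs
  have hx : 0 < x := hs0.trans hsx
  have hsq : √(1 - (2 * s / x - 1) ^ 2) = 2 * √s * √(x - s) / x := by
    rw [← sqrt_sq (by positivity : 0 ≤ 2 * √s * √(x - s) / x), div_pow, mul_pow, mul_pow,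
      sq_sqrt hs0.le, sq_sqrt (sub_pos.2 hsx).le]
    congr 1
    field_simp
    ring
  have h_ne_neg_one : 2 * s / x - 1 ≠ -1 := by
    rw [Ne, sub_eq_neg_self]; positivity
  have h_ne_one : 2 * s / x - 1 ≠ 1 := by
    rw [Ne, sub_eq_iff_eq_add, div_eq_iff hx.ne']; intro h; linarith
  refine ((hasDerivAt_arcsin h_ne_neg_one h_ne_one).comp s
    ((((hasDerivAt_id' s).const_mul 2).div_const x).sub_const 1)).congr_deriv ?_
  have : 0 < √s := sqrt_pos.2 hs0
  have : 0 < √(x - s) := sqrt_pos.2 (sub_pos.2 hsx)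
  rw [hsq]
  field_simp

lemma intervalIntegrable_inv_sqrt_mul_sqrt_sub {x : ℝ} (hx : 0 < x) :
    IntervalIntegrable (fun s => (√s * √(x - s))⁻¹) volume (x / 2) x :=
  (intervalIntegrable_iff_integrableOn_Ioc_of_le (by linarith)).2 <|
    integrableOn_deriv_of_nonneg (by fun_prop)
      (fun _ hs => hasDerivAt_arcsin_two_mul_div_sub_one ⟨by linarith [hs.1], hs.2⟩)
      fun _ _ => by positivity

lemma integral_inv_sqrt_mul_sqrt_sub {x : ℝ} (hx : 0 < x) :
    ∫ s in x / 2..x, (√s * √(x - s))⁻¹ = π / 2 := by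
  rw [integral_eq_sub_of_hasDerivAt_of_le (by linarith) (by fun_prop)
    (fun _ hs => hasDerivAt_arcsin_two_mul_div_sub_one ⟨by linarith [hs.1], hs.2⟩)
    (intervalIntegrable_inv_sqrt_mul_sqrt_sub hx)]
  field_simp
  norm_num
  ring

section DivSqrtSub

variable {x : ℝ} {g : ℝ → ℝ}

lemma intervalIntegrable_div_sqrt_sub {c : ℝ} (hcx : c ≤ x) (hg : ContinuousOn g (Icc c x)) :
    IntervalIntegrable (fun s => g s / √(x - s)) volume c x :=
  (intervalIntegrable_inv_sqrt_sub hcx).continuousOn_mul (by rwa [uIcc_of_le hcx])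

lemma IntervalIntegrable.div_sqrt_sub {c d : ℝ} (hcd : c ≤ d) (hdx : d < x)
    (hg : IntervalIntegrable g volume c d) :
    IntervalIntegrable (fun s => g s / √(x - s)) volume c d := by
  refine hg.mul_continuousOn (ContinuousOn.inv₀ (by fun_prop) fun s hs => ?_)
  rw [uIcc_of_le hcd] at hs
  exact (sqrt_pos.2 (sub_pos.2 (hs.2.trans_lt hdx))).ne'

lemma integral_div_sqrt_sub_le_of_le {c M : ℝ} (hcx : c ≤ x) (hg : ContinuousOn g (Icc c x))
    (hgM : ∀ s ∈ Ioo c x, g s ≤ M) :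
    ∫ s in c..x, g s / √(x - s) ≤ 2 * M * √(x - c) := by
  calc ∫ s in c..x, g s / √(x - s)
      ≤ ∫ s in c..x, M * (√(x - s))⁻¹ :=
        integral_mono_on_of_le_Ioo hcx (intervalIntegrable_div_sqrt_sub hcx hg)
          ((intervalIntegrable_inv_sqrt_sub hcx).const_mul M)
          fun s hs => div_le_div_of_nonneg_right (hgM s hs) (sqrt_nonneg _)
    _ = 2 * M * √(x - c) := by
        rw [intervalIntegral.integral_const_mul, integral_inv_sqrt_sub hcx]; ring

lemma integral_div_sqrt_sub_le_of_le_mul_inv_sqrt {K : ℝ} (hx : 0 < x)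
    (hg : ContinuousOn g (Icc (x / 2) x)) (hgK : ∀ s ∈ Ioo (x / 2) x, g s ≤ K * (√s)⁻¹) :
    ∫ s in x / 2..x, g s / √(x - s) ≤ K * (π / 2) := by
  calc ∫ s in x / 2..x, g s / √(x - s)
      ≤ ∫ s in x / 2..x, K * (√s * √(x - s))⁻¹ :=
        integral_mono_on_of_le_Ioo (by linarith)
          (intervalIntegrable_div_sqrt_sub (by linarith) hg)
          ((intervalIntegrable_inv_sqrt_mul_sqrt_sub hx).const_mul K) fun s hs => by
            rw [mul_inv, ← mul_assoc, ← div_eq_mul_inv]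
            exact div_le_div_of_nonneg_right (hgK s hs) (sqrt_nonneg _)
    _ = K * (π / 2) := by
        rw [intervalIntegral.integral_const_mul, integral_inv_sqrt_mul_sqrt_sub hx]

lemma integral_div_sqrt_sub_le_inv_sqrt_mul {c d : ℝ} (hcd : c ≤ d) (hdx : d < x)
    (hg : IntervalIntegrable g volume c d) (hg0 : ∀ s ∈ Ioo c d, 0 ≤ g s) :
    ∫ s in c..d, g s / √(x - s) ≤ (√(x - d))⁻¹ * ∫ s in c..d, g s := by
  rw [← intervalIntegral.integral_const_mul]
  refine integral_mono_on_of_le_Ioo hcd (hg.div_sqrt_sub hcd hdx) (hg.const_mul _) fun s hs => ?_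
  rw [div_eq_mul_inv, mul_comm]
  refine mul_le_mul_of_nonneg_right (inv_anti₀ (sqrt_pos.2 (sub_pos.2 hdx)) ?_) (hg0 s hs)
  exact sqrt_le_sqrt (by linarith [hs.2])

end DivSqrtSub

lemma exp_neg_mul_rpow_le_rpow {s b : ℝ} (hs : 0 ≤ s) : exp (-s) * s ^ b ≤ s ^ b :=
  mul_le_of_le_one_left (rpow_nonneg hs b) (exp_le_one_iff.2 (by linarith))

lemma exp_neg_mul_rpow_le_rpow_self_mul_exp_neg {a s : ℝ} (ha : 0 < a) (hs : 0 ≤ s) :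
    exp (-s) * s ^ a ≤ a ^ a * exp (-a) := by
  have h : (s / a) ^ a ≤ exp (s - a) :=
    calc (s / a) ^ a ≤ exp (s / a - 1) ^ a :=
          rpow_le_rpow (by positivity) (by linarith [add_one_le_exp (s / a - 1)]) ha.le
      _ = exp (s - a) := by rw [← exp_mul]; congr 1; field_simp
  rw [div_rpow hs ha.le, div_le_iff₀ (by positivity)] at h
  calc exp (-s) * s ^ a ≤ exp (-s) * (exp (s - a) * a ^ a) := by gcongr
    _ = a ^ a * (exp (-s) * exp (s - a)) := by ring
    _ = a ^ a * exp (-a) := by rw [← exp_add]; ring_nf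

lemma half_rpow_mul_le {a x c : ℝ} (ha : 0 ≤ a) (hx : 0 ≤ x)
    (hc : c ≤ 1 + log 2 + a * log 2) :
    (x / 2) ^ a * (1 + c * a) ≤ (1 + a) * x ^ a := by
  have h2 : 2 ^ (-a) * (1 + a * log 2) ≤ 1 := by
    rw [rpow_neg zero_le_two, inv_mul_le_one₀ (by positivity), rpow_def_of_pos two_pos,
      mul_comm a]
    exact add_one_le_exp _ |>.trans_eq' (add_comm _ _)
  have hxa : (x / 2) ^ a = 2 ^ (-a) * x ^ a := by
    rw [div_rpow hx zero_le_two, rpow_neg zero_le_two]; ring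
  calc (x / 2) ^ a * (1 + c * a) ≤ (x / 2) ^ a * ((1 + a * log 2) * (1 + a)) := by
        gcongr; nlinarith
    _ = (2 ^ (-a) * (1 + a * log 2)) * ((1 + a) * x ^ a) := by rw [hxa]; ring
    _ ≤ (1 + a) * x ^ a := mul_le_of_le_one_left (by positivity) h2

section GammaWeight

variable {a : ℝ}

lemma intervalIntegrable_exp_neg_mul_rpow (ha : 0 < a) (c d : ℝ) :
    IntervalIntegrable (fun s => exp (-s) * s ^ (a - 1)) volume c d :=
  (intervalIntegrable_rpow' (by linarith)).continuousOn_mul (by fun_prop)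

lemma integral_exp_neg_mul_rpow_le_Gamma (ha : 0 < a) {y : ℝ} (hy : 0 ≤ y) :
    ∫ s in 0..y, exp (-s) * s ^ (a - 1) ≤ Gamma a := by
  rw [integral_of_le hy, Gamma_eq_integral ha]
  exact setIntegral_mono_set (GammaIntegral_convergent ha)
    (ae_restrict_of_forall_mem measurableSet_Ioi fun s (hs : 0 < s) => by positivity)
    Ioc_subset_Ioi_self.eventuallyLE

lemma integral_exp_neg_mul_rpow_le_rpow_div (ha : 0 < a) {y : ℝ} (hy : 0 ≤ y) :
    ∫ s in 0..y, exp (-s) * s ^ (a - 1) ≤ y ^ a / a := by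
  calc ∫ s in 0..y, exp (-s) * s ^ (a - 1) ≤ ∫ s in 0..y, s ^ (a - 1) :=
        integral_mono_on hy (intervalIntegrable_exp_neg_mul_rpow ha 0 y)
          (intervalIntegrable_rpow' (by linarith)) fun s hs => exp_neg_mul_rpow_le_rpow hs.1
    _ = y ^ a / a := by
        rw [integral_rpow (Or.inl (by linarith)), sub_add_cancel, zero_rpow ha.ne', sub_zero]

end GammaWeight

section Halves

variable {a x : ℝ}

lemma continuousOn_exp_neg_mul_rpow (hx : 0 < x) :
    ContinuousOn (fun s => exp (-s) * s ^ (a - 1)) (Icc (x / 2) x) :=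
  (continuous_exp.comp continuous_neg).continuousOn.mul
    (continuousOn_id.rpow_const fun s hs => Or.inl (show (0 : ℝ) < s by linarith [hs.1]).ne')

lemma integral_first_half_le (ha : 0 < a) (hx : 0 < x) :
    ∫ s in 0..x / 2, exp (-s) * s ^ (a - 1) / √(x - s)
      ≤ (√(x / 2))⁻¹ * ∫ s in 0..x / 2, exp (-s) * s ^ (a - 1) := by
  have := integral_div_sqrt_sub_le_inv_sqrt_mul (by linarith : 0 ≤ x / 2)
    (by linarith : x / 2 < x) (intervalIntegrable_exp_neg_mul_rpow ha 0 (x / 2))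
    fun s hs => by have := hs.1; positivity
  rwa [show x - x / 2 = x / 2 by ring] at this

lemma integral_second_half_le_Gamma (ha : 0 < a) (hx : 0 < x) :
    ∫ s in x / 2..x, exp (-s) * s ^ (a - 1) / √(x - s)
      ≤ a ^ a * exp (-a) * (√(x / 2))⁻¹ * (π / 2) := by
  refine integral_div_sqrt_sub_le_of_le_mul_inv_sqrt hx (continuousOn_exp_neg_mul_rpow hx)
    fun s hs => ?_
  have hs0 : 0 < s := by linarith [hs.1]
  have hss : s ^ (a - 1) = s ^ a * ((√s)⁻¹ * (√s)⁻¹) := by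
    rw [← mul_inv, mul_self_sqrt hs0.le, rpow_sub_one hs0.ne', div_eq_mul_inv]
  calc exp (-s) * s ^ (a - 1) = exp (-s) * s ^ a * (√s)⁻¹ * (√s)⁻¹ := by rw [hss]; ring
    _ ≤ a ^ a * exp (-a) * (√(x / 2))⁻¹ * (√s)⁻¹ := by
        gcongr ?_ * ?_ * _
        · exact exp_neg_mul_rpow_le_rpow_self_mul_exp_neg ha hs0.le
        · gcongr; exact hs.1.le

lemma integral_second_half_le_of_le_half (ha : a ≤ 1 / 2) (hx : 0 < x) :
    ∫ s in x / 2..x, exp (-s) * s ^ (a - 1) / √(x - s)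
      ≤ (√(x / 2))⁻¹ * ((x / 2) ^ a * (π / 2)) := by
  have hy : 0 < x / 2 := by linarith
  calc _ ≤ (x / 2) ^ (a - 1 / 2) * (π / 2) :=
        integral_div_sqrt_sub_le_of_le_mul_inv_sqrt hx (continuousOn_exp_neg_mul_rpow hx)
          fun s hs => by
            have hs0 : 0 < s := by linarith [hs.1]
            rw [show a - 1 = (a - 1 / 2) + -(1 / 2) by ring, rpow_add hs0, rpow_neg hs0.le,
              ← sqrt_eq_rpow, ← mul_assoc]
            exact mul_le_mul_of_nonneg_right ((exp_neg_mul_rpow_le_rpow hs0.le).trans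
              (rpow_le_rpow_of_nonpos hy hs.1.le (by linarith))) (by positivity)
    _ = _ := by rw [rpow_sub hy, sqrt_eq_rpow]; ring

lemma integral_second_half_le_of_le_one (ha : a ≤ 1) (hx : 0 < x) :
    ∫ s in x / 2..x, exp (-s) * s ^ (a - 1) / √(x - s)
      ≤ (√(x / 2))⁻¹ * (2 * (x / 2) ^ a) := by
  have hy : 0 < x / 2 := by linarith
  calc _ ≤ 2 * (x / 2) ^ (a - 1) * √(x - x / 2) :=
        integral_div_sqrt_sub_le_of_le (by linarith) (continuousOn_exp_neg_mul_rpow hx)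
          fun s hs => (exp_neg_mul_rpow_le_rpow (by linarith [hs.1])).trans
            (rpow_le_rpow_of_nonpos hy hs.1.le (by linarith))
    _ = _ := by
        rw [show x - x / 2 = x / 2 by ring, rpow_sub_one hy.ne']
        field_simp
        rw [sq_sqrt hy.le]; ring

lemma integral_second_half_le_of_one_le (ha : 1 ≤ a) (hx : 0 < x) :
    ∫ s in x / 2..x, exp (-s) * s ^ (a - 1) / √(x - s) ≤ (√(x / 2))⁻¹ * x ^ a := by
  have hy : 0 < x / 2 := by linarith
  calc _ ≤ 2 * x ^ (a - 1) * √(x - x / 2) :=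
        integral_div_sqrt_sub_le_of_le (by linarith) (continuousOn_exp_neg_mul_rpow hx)
          fun s hs => (exp_neg_mul_rpow_le_rpow (by linarith [hs.1])).trans
            (rpow_le_rpow (by linarith [hs.1]) hs.2.le (by linarith))
    _ = _ := by
        rw [show x - x / 2 = x / 2 by ring, rpow_sub_one hx.ne']
        field_simp
        rw [sq_sqrt hy.le]; ring

lemma integral_second_half_le_rpow (ha : 0 < a) (hx : 0 < x) :
    ∫ s in x / 2..x, exp (-s) * s ^ (a - 1) / √(x - s)
      ≤ (√(x / 2))⁻¹ * ((1 / a + 1) * x ^ a - (x / 2) ^ a / a) := by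
  have hlog := log_two_gt_d9
  obtain ⟨B, hJ, hB⟩ : ∃ B, ∫ s in x / 2..x, exp (-s) * s ^ (a - 1) / √(x - s)
      ≤ (√(x / 2))⁻¹ * B ∧ (x / 2) ^ a + a * B ≤ (1 + a) * x ^ a := by
    rcases le_total a (1 / 2) with ha2 | ha2
    · refine ⟨_, integral_second_half_le_of_le_half ha2 hx, ?_⟩
      have := half_rpow_mul_le ha.le hx.le (c := π / 2) (by nlinarith [pi_lt_d2])
      linarith
    rcases le_total a 1 with ha1 | ha1
    · refine ⟨_, integral_second_half_le_of_le_one ha1 hx, ?_⟩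
      have := half_rpow_mul_le ha.le hx.le (c := 2) (by nlinarith)
      linarith
    · refine ⟨_, integral_second_half_le_of_one_le ha1 hx, ?_⟩
      have := rpow_le_rpow (by linarith) (by linarith : x / 2 ≤ x) ha.le
      nlinarith [rpow_pos_of_pos hx a]
  refine hJ.trans (mul_le_mul_of_nonneg_left ?_ (by positivity))
  rw [show (1 / a + 1) * x ^ a - (x / 2) ^ a / a = ((1 + a) * x ^ a - (x / 2) ^ a) / a by
    field_simp, le_div_iff₀ ha]
  linarith

end Halves

theorem stmt7 (a x : ℝ) (ha : 0 < a) (hx : 0 < x) :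
    (∫ s in Set.Ioo (0:ℝ) x, Real.exp (-s) * s^(a-1) / Real.sqrt (x - s)) ≤
      min (2 * Real.Gamma a + π * a^a * Real.exp (-a)) (2*(1/a + 1) * x^a) /
        Real.sqrt (2*x) := by
  have hy : 0 < x / 2 := by linarith
  have hr : (√(x / 2))⁻¹ = 2 / √(2 * x) := by
    rw [show 2 * x = 2 ^ 2 * (x / 2) by ring, sqrt_mul (by norm_num), sqrt_sq zero_le_two]
    have := sqrt_pos.2 hy
    field_simp
  rw [← integral_Ioc_eq_integral_Ioo, ← integral_of_le hx.le,
    ← integral_add_adjacent_intervals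
      ((intervalIntegrable_exp_neg_mul_rpow ha 0 (x / 2)).div_sqrt_sub hy.le (by linarith))
      (intervalIntegrable_div_sqrt_sub (by linarith) (continuousOn_exp_neg_mul_rpow hx)),
    ← min_div_div_right (sqrt_nonneg _)]
  have hJ₁ := integral_first_half_le ha hx
  refine le_min ?_ ?_
  · calc _ ≤ (√(x / 2))⁻¹ * Gamma a + a ^ a * exp (-a) * (√(x / 2))⁻¹ * (π / 2) :=
          add_le_add (hJ₁.trans (by gcongr; exact integral_exp_neg_mul_rpow_le_Gamma ha hy.le))
            (integral_second_half_le_Gamma ha hx)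
      _ = _ := by rw [hr]; ring
  · calc _ ≤ (√(x / 2))⁻¹ * ((x / 2) ^ a / a)
          + (√(x / 2))⁻¹ * ((1 / a + 1) * x ^ a - (x / 2) ^ a / a) :=
          add_le_add (hJ₁.trans (by gcongr; exact integral_exp_neg_mul_rpow_le_rpow_div ha hy.le))
            (integral_second_half_le_rpow ha hx)
      _ = _ := by rw [hr]; ring
end

section
/- Let ψ, ψ̃ be twice differentiable, increasing, nonvanishing functions on (0,∞) with strictly positive derivatives, satisfying −ψ''(ζ)/ψ'(ζ) ≤ −ψ̃''(ζ)/ψ̃'(ζ) for all ζ > 0. Define ψ_λ(ξ) = (1 − ξ/λ²)/(1 − ψ(ξ)/ψ(λ²)) for ξ ≠ λ², extended continuously by ψ_λ(λ²) = ψ(λ²)/(λ² ψ'(λ²)), and similarly ψ̃_λ. Then for 0 < λ < ξ: ψ_λ(ξ²)/ψ_λ(λ²) ≤ ψ̃_λ(ξ²)/ψ̃_λ(λ²), and for 0 < ξ < λ the reversed inequality holds. -/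
/-!
The hypothesis says `(log ψ')' ≥ (log ψ̃')'`, so `ψ'/ψ̃'` is increasing on `(0, ∞)`.
By Cauchy's mean value theorem the ratio of secant slopes `slope ψ a b / slope ψ̃ a b` is a value
of `ψ'/ψ̃'` between `a` and `b`, so it is at least `ψ'(a)/ψ̃'(a)` when `a < b` and at most
`ψ'(a)/ψ̃'(a)` when `b < a`. Since `ψ_λ(ξ²)/ψ_λ(λ²) = ψ'(λ²) / slope ψ (ξ²) (λ²)`, this comparison
is the claim.
-/

open Set

/-- The ratio `ψ_λ(ξ²)/ψ_λ(λ²) = ψ'(λ²)(λ² − ξ²)/(ψ(λ²) − ψ(ξ²))`. -/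
noncomputable def psiLamRatio (ψ : ℝ → ℝ) (lam ξ : ℝ) : ℝ :=
  deriv ψ (lam^2) * (lam^2 - ξ^2) / (ψ (lam^2) - ψ (ξ^2))

theorem monotoneOn_div_of_logDeriv_le {u v : ℝ → ℝ} {s : Set ℝ} (hs : Convex ℝ s)
    (hs' : IsOpen s) (hu : ∀ x ∈ s, DifferentiableAt ℝ u x) (hv : ∀ x ∈ s, DifferentiableAt ℝ v x)
    (hu0 : ∀ x ∈ s, 0 < u x) (hv0 : ∀ x ∈ s, 0 < v x)
    (h : ∀ x ∈ s, logDeriv v x ≤ logDeriv u x) :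
    MonotoneOn (fun x => u x / v x) s := by
  have hdiff : DifferentiableOn ℝ (fun x => u x / v x) s := fun x hx =>
    ((hu x hx).div (hv x hx) (hv0 x hx).ne').differentiableWithinAt
  refine monotoneOn_of_deriv_nonneg hs hdiff.continuousOn (by rwa [hs'.interior_eq]) ?_
  rw [hs'.interior_eq]
  intro x hx
  have hlog := h x hx
  rw [logDeriv_apply, logDeriv_apply, div_le_div_iff₀ (hv0 x hx) (hu0 x hx)] at hlog
  rw [deriv_fun_div (hu x hx) (hv x hx) (hv0 x hx).ne']
  exact div_nonneg (by linarith) (sq_nonneg _)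

theorem slope_div_slope_mem_Icc {f g : ℝ → ℝ} {s : Set ℝ} (hs : Convex ℝ s)
    (hf : DifferentiableOn ℝ f s) (hg : DifferentiableOn ℝ g s) (hg' : ∀ x ∈ s, 0 < deriv g x)
    (hmono : MonotoneOn (fun x => deriv f x / deriv g x) s) {a b : ℝ} (ha : a ∈ s) (hb : b ∈ s)
    (hab : a < b) :
    slope f a b / slope g a b ∈ Icc (deriv f a / deriv g a) (deriv f b / deriv g b) := by
  have hIcc : Icc a b ⊆ s := hs.ordConnected.out ha hb
  obtain ⟨c, hc, hcauchy⟩ := exists_ratio_deriv_eq_ratio_slope f hab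
    ((hf.mono hIcc).continuousOn) (hf.mono (Ioo_subset_Icc_self.trans hIcc))
    g ((hg.mono hIcc).continuousOn) (hg.mono (Ioo_subset_Icc_self.trans hIcc))
  have hcs : c ∈ s := hIcc (Ioo_subset_Icc_self hc)
  have hgab : g a < g b := strictMonoOn_of_deriv_pos hs hg.continuousOn
    (fun x hx => hg' x (interior_subset hx)) ha hb hab
  have hratio : slope f a b / slope g a b = deriv f c / deriv g c := by
    rw [slope_def_field, slope_def_field, div_div_div_cancel_right₀ (sub_ne_zero.2 hab.ne'),
      div_eq_div_iff (sub_pos.2 hgab).ne' (hg' c hcs).ne']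
    linarith
  rw [hratio]
  exact ⟨hmono ha hcs hc.1.le, hmono hcs hb hc.2.le⟩

theorem psiLamRatio_eq_deriv_div_slope (ψ : ℝ → ℝ) (lam ξ : ℝ) :
    psiLamRatio ψ lam ξ = deriv ψ (lam^2) / slope ψ (ξ^2) (lam^2) := by
  rw [psiLamRatio, slope_def_field, div_div_eq_mul_div]

theorem stmt11_general (ψ ψt : ℝ → ℝ)
    (hψd : ∀ ζ > (0:ℝ), DifferentiableAt ℝ ψ ζ ∧ DifferentiableAt ℝ (deriv ψ) ζ)
    (hψtd : ∀ ζ > (0:ℝ), DifferentiableAt ℝ ψt ζ ∧ DifferentiableAt ℝ (deriv ψt) ζ)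
    (hψ' : ∀ ζ > (0:ℝ), 0 < deriv ψ ζ)
    (hψt' : ∀ ζ > (0:ℝ), 0 < deriv ψt ζ)
    (hψmono : StrictMonoOn ψ (Set.Ioi 0))
    (hψtmono : StrictMonoOn ψt (Set.Ioi 0))
    (h : ∀ ζ > (0:ℝ), -(deriv (deriv ψ) ζ) / deriv ψ ζ ≤
        -(deriv (deriv ψt) ζ) / deriv ψt ζ) :
    (∀ lam ξ : ℝ, 0 < lam → lam < ξ →
        psiLamRatio ψ lam ξ ≤ psiLamRatio ψt lam ξ) ∧
    (∀ lam ξ : ℝ, 0 < ξ → ξ < lam →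
        psiLamRatio ψt lam ξ ≤ psiLamRatio ψ lam ξ) := by
  have hmono : MonotoneOn (fun ζ => deriv ψ ζ / deriv ψt ζ) (Ioi 0) :=
    monotoneOn_div_of_logDeriv_le (convex_Ioi 0) isOpen_Ioi (fun ζ hζ => (hψd ζ hζ).2)
      (fun ζ hζ => (hψtd ζ hζ).2) hψ' hψt' fun ζ hζ => by
        simpa only [logDeriv_apply, neg_div, neg_le_neg_iff] using h ζ hζ
  have hψD : DifferentiableOn ℝ ψ (Ioi 0) := fun x hx => (hψd x hx).1.differentiableWithinAt
  have hψtD : DifferentiableOn ℝ ψt (Ioi 0) := fun x hx => (hψtd x hx).1.differentiableWithinAt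
  have hcauchy {a b : ℝ} (ha : 0 < a) (hb : 0 < b) (hab : a < b) :=
    slope_div_slope_mem_Icc (convex_Ioi 0) hψD hψtD hψt' hmono ha hb hab
  have hslope_pos {x y : ℝ} (hx : 0 < x) (hxy : x < y) : 0 < slope ψ x y ∧ 0 < slope ψt x y :=
    ⟨hψmono.slope_pos hx (hx.trans hxy) hxy.ne, hψtmono.slope_pos hx (hx.trans hxy) hxy.ne⟩
  constructor
  · intro lam ξ hlam hlξ
    have ha : 0 < lam^2 := by positivity
    have hab : lam^2 < ξ^2 := by gcongr
    obtain ⟨hS, hSt⟩ := hslope_pos ha hab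
    have hle := (hcauchy ha (ha.trans hab) hab).1
    rw [div_le_div_iff₀ (hψt' _ ha) hSt] at hle
    rw [psiLamRatio_eq_deriv_div_slope, psiLamRatio_eq_deriv_div_slope, slope_comm ψ,
      slope_comm ψt, div_le_div_iff₀ hS hSt]
    linarith
  · intro lam ξ hξ hξl
    have hb : 0 < ξ^2 := by positivity
    have hba : ξ^2 < lam^2 := by gcongr
    obtain ⟨hS, hSt⟩ := hslope_pos hb hba
    have hle := (hcauchy hb (hb.trans hba) hba).2
    rw [div_le_div_iff₀ hSt (hψt' _ (hb.trans hba))] at hle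
    rw [psiLamRatio_eq_deriv_div_slope, psiLamRatio_eq_deriv_div_slope,
      div_le_div_iff₀ hSt hS]
    linarith

theorem stmt11 (ψ ψt : ℝ → ℝ)
    (hψd : ∀ ζ > (0:ℝ), DifferentiableAt ℝ ψ ζ ∧ DifferentiableAt ℝ (deriv ψ) ζ)
    (hψtd : ∀ ζ > (0:ℝ), DifferentiableAt ℝ ψt ζ ∧ DifferentiableAt ℝ (deriv ψt) ζ)
    (hψ' : ∀ ζ > (0:ℝ), 0 < deriv ψ ζ)
    (hψt' : ∀ ζ > (0:ℝ), 0 < deriv ψt ζ)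
    (hψmono : StrictMonoOn ψ (Set.Ioi 0))
    (hψtmono : StrictMonoOn ψt (Set.Ioi 0))
    (hψne : ∀ ζ > (0:ℝ), ψ ζ ≠ 0)
    (hψtne : ∀ ζ > (0:ℝ), ψt ζ ≠ 0)
    (h : ∀ ζ > (0:ℝ), -(deriv (deriv ψ) ζ) / deriv ψ ζ ≤
        -(deriv (deriv ψt) ζ) / deriv ψt ζ) :
    (∀ lam ξ : ℝ, 0 < lam → lam < ξ →
        psiLamRatio ψ lam ξ ≤ psiLamRatio ψt lam ξ) ∧
    (∀ lam ξ : ℝ, 0 < ξ → ξ < lam →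
        psiLamRatio ψt lam ξ ≤ psiLamRatio ψ lam ξ) :=
  stmt11_general ψ ψt hψd hψtd hψ' hψt' hψmono hψtmono h
end

section
/- Let ρ ∈ (0,1] and ψ(ξ) = ξ^ρ on (0,∞). Define θ_λ = (1/π) ∫_0^1 (1/(1−ζ²)) log( ψ_λ(λ²/ζ²) / ψ_λ(λ²ζ²) ) dζ, where ψ_λ(ξ) = (1 − ξ/λ²)/(1 − ψ(ξ)/ψ(λ²)) (extended continuously at ξ = λ²). Then θ_λ = (1 − ρ)π/4 for every λ > 0. -/
open Real MeasureTheory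

/-- `ψ_λ(ξ) = (1 − ξ/λ²)/(1 − ψ(ξ)/ψ(λ²))`. -/
noncomputable def psiLam (ψ : ℝ → ℝ) (lam ξ : ℝ) : ℝ :=
  (1 - ξ/lam^2) / (1 - ψ ξ / ψ (lam^2))

/-!
For `ψ ξ = ξ ^ ρ` the ratio `ψ_λ(λ²/t) / ψ_λ(λ²t)` collapses to `t ^ (ρ - 1)`, so the integrand
of `θ_λ` is `2(ρ - 1) log ζ / (1 - ζ²)`. Expanding `1/(1 - ζ²)` as a geometric series and using
`∫₀¹ ζ^n log ζ = -1/(n+1)²` gives `∫₀¹ log ζ / (1 - ζ²) = -∑ 1/(2k+1)² = -π²/8`.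
-/

lemma rpow_ne_one_of_ne_one {t ρ : ℝ} (ht : 0 < t) (ht1 : t ≠ 1) (hρ : ρ ≠ 0) : t ^ ρ ≠ 1 := by
  rwa [Ne, ← one_rpow ρ, rpow_left_inj ht.le zero_le_one hρ]

lemma psiLam_rpow_mul {ρ lam t : ℝ} (hlam : lam ≠ 0) (ht : 0 ≤ t) :
    psiLam (fun ξ => ξ ^ ρ) lam (lam ^ 2 * t) = (1 - t) / (1 - t ^ ρ) := by
  have hl2 : 0 < lam ^ 2 := by positivity
  rw [psiLam, mul_rpow hl2.le ht, mul_div_cancel_left₀ _ hl2.ne',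
    mul_div_cancel_left₀ _ (rpow_pos_of_pos hl2 ρ).ne']

lemma psiLam_rpow_div_div_psiLam_rpow_mul {ρ lam t : ℝ} (hρ : ρ ≠ 0) (hlam : lam ≠ 0)
    (ht : 0 < t) (ht1 : t ≠ 1) :
    psiLam (fun ξ => ξ ^ ρ) lam (lam ^ 2 / t) / psiLam (fun ξ => ξ ^ ρ) lam (lam ^ 2 * t)
      = t ^ (ρ - 1) := by
  have hu1 : t ^ ρ - 1 ≠ 0 := sub_ne_zero.2 (rpow_ne_one_of_ne_one ht ht1 hρ)
  have ht1' : t - 1 ≠ 0 := sub_ne_zero.2 ht1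
  rw [div_eq_mul_inv (lam ^ 2), psiLam_rpow_mul hlam (inv_nonneg.2 ht.le),
    psiLam_rpow_mul hlam ht.le, inv_rpow ht.le, rpow_sub_one ht.ne']
  field_simp
  ring

lemma intervalIntegrable_pow_mul_log (n : ℕ) :
    IntervalIntegrable (fun x : ℝ => x ^ n * log x) volume 0 1 :=
  intervalIntegral.intervalIntegrable_log'.continuousOn_mul (continuous_pow n).continuousOn

lemma integral_pow_mul_log (n : ℕ) : ∫ x in (0:ℝ)..1, x ^ n * log x = -1 / (n + 1) ^ 2 := by
  -- `x ^ (n+1) log x` is written as `x ^ n * (x log x)` to get continuity at `0`.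
  let F : ℝ → ℝ := fun x => x ^ n * (x * log x) / (n + 1) - x ^ (n + 1) / (n + 1) ^ 2
  have hF : ∀ x ∈ Set.Ioo (0:ℝ) 1, HasDerivAt F (x ^ n * log x) x := by
    intro x hx
    have h := (((hasDerivAt_pow (n + 1) x).mul (hasDerivAt_log hx.1.ne')).div_const
      ((n:ℝ) + 1)).sub ((hasDerivAt_pow (n + 1) x).div_const (((n:ℝ) + 1) ^ 2))
    have hFeq : F = fun y => y ^ (n + 1) * log y / (n + 1) - y ^ (n + 1) / (n + 1) ^ 2 := by
      ext y
      simp only [F]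
      ring
    rw [hFeq]
    refine h.congr_deriv ?_
    rw [Nat.add_sub_cancel]
    field_simp [hx.1.ne']
    push_cast
    ring
  have hcont : Continuous F := by fun_prop (disch := exact continuous_mul_log)
  rw [intervalIntegral.integral_eq_sub_of_hasDerivAt_of_le zero_le_one hcont.continuousOn hF
    (intervalIntegrable_pow_mul_log n)]
  simp only [F]
  field_simp
  norm_num

lemma hasSum_one_div_odd_sq : HasSum (fun k : ℕ => 1 / (2 * (k:ℝ) + 1) ^ 2) (π ^ 2 / 8) := by
  let f : ℕ → ℝ := fun n => 1 / (n:ℝ) ^ 2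
  have hodd : Summable fun k => f (2 * k + 1) :=
    hasSum_zeta_two.summable.comp_injective fun a b h => by omega
  have heven : HasSum (fun k => f (2 * k)) (π ^ 2 / 24) := by
    have hf : (fun k => f (2 * k)) = fun k => 1 / 4 * f k := by
      ext k
      simp only [f]
      push_cast
      ring
    rw [hf, show π ^ 2 / 24 = 1 / 4 * (π ^ 2 / 6) by ring]
    exact hasSum_zeta_two.mul_left _
  have hsplit := (heven.even_add_odd hodd.hasSum).unique hasSum_zeta_two
  have hf : (fun k => f (2 * k + 1)) = fun k : ℕ => 1 / (2 * (k:ℝ) + 1) ^ 2 := by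
    ext k
    simp only [f]
    push_cast
    ring
  rw [← hf, show π ^ 2 / 8 = ∑' k, f (2 * k + 1) by linarith]
  exact hodd.hasSum

lemma integral_log_div_one_sub_sq :
    ∫ ζ in Set.Ioo (0:ℝ) 1, log ζ / (1 - ζ ^ 2) = -(π ^ 2 / 8) := by
  let F : ℕ → ℝ → ℝ := fun k ζ => ζ ^ (2 * k) * log ζ
  have hint (k : ℕ) : IntegrableOn (F k) (Set.Ioo 0 1) :=
    (intervalIntegrable_iff_integrableOn_Ioo_of_le zero_le_one).1
      (intervalIntegrable_pow_mul_log (2 * k))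
  have hval (k : ℕ) : ∫ ζ in Set.Ioo (0:ℝ) 1, F k ζ = -(1 / (2 * (k:ℝ) + 1) ^ 2) := by
    rw [← integral_Ioc_eq_integral_Ioo, ← intervalIntegral.integral_of_le zero_le_one,
      integral_pow_mul_log]
    push_cast
    ring
  have hnorm (k : ℕ) : ∫ ζ in Set.Ioo (0:ℝ) 1, ‖F k ζ‖ = 1 / (2 * (k:ℝ) + 1) ^ 2 := by
    rw [setIntegral_congr_fun measurableSet_Ioo (g := fun ζ => -F k ζ) fun ζ hζ =>
      norm_of_nonpos (mul_nonpos_of_nonneg_of_nonpos (pow_nonneg hζ.1.le _)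
        (log_nonpos hζ.1.le hζ.2.le)), integral_neg, hval, neg_neg]
  have hgeom : Set.EqOn (fun ζ => ∑' k, F k ζ) (fun ζ => log ζ / (1 - ζ ^ 2)) (Set.Ioo 0 1) := by
    intro ζ hζ
    have hζ2 : ζ ^ 2 < 1 := by nlinarith [hζ.1, hζ.2]
    simp only [F, pow_mul, tsum_mul_right, tsum_geometric_of_lt_one (by positivity) hζ2]
    ring
  have hsum := hasSum_integral_of_summable_integral_norm hint
    (by simpa only [hnorm] using hasSum_one_div_odd_sq.summable)
  simp only [hval, setIntegral_congr_fun measurableSet_Ioo hgeom] at hsum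
  exact hsum.unique hasSum_one_div_odd_sq.neg

theorem stmt16 (ρ : ℝ) (hρ : ρ ∈ Set.Ioc (0:ℝ) 1) (lam : ℝ) (hlam : 0 < lam) :
    (1/π) * ∫ ζ in Set.Ioo (0:ℝ) 1,
        (1/(1-ζ^2)) * Real.log (psiLam (fun ξ => ξ^ρ) lam (lam^2/ζ^2) /
          psiLam (fun ξ => ξ^ρ) lam (lam^2*ζ^2))
      = (1-ρ)*π/4 := by
  have hintegrand : Set.EqOn
      (fun ζ : ℝ => (1/(1-ζ^2)) * Real.log (psiLam (fun ξ => ξ^ρ) lam (lam^2/ζ^2) /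
          psiLam (fun ξ => ξ^ρ) lam (lam^2*ζ^2)))
      (fun ζ => 2 * (ρ - 1) * (log ζ / (1 - ζ ^ 2))) (Set.Ioo 0 1) := by
    intro ζ hζ
    have hζ2 : ζ ^ 2 ≠ 1 := by nlinarith [hζ.1, hζ.2]
    dsimp only
    rw [psiLam_rpow_div_div_psiLam_rpow_mul hρ.1.ne' hlam.ne' (pow_pos hζ.1 2) hζ2,
      log_rpow (pow_pos hζ.1 2), log_pow]
    push_cast
    ring
  rw [setIntegral_congr_fun measurableSet_Ioo hintegrand, integral_const_mul,
    integral_log_div_one_sub_sq]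
  field_simp
  ring
end

section
/- Let ψ be a complete Bernstein function, smooth on (0,∞) with ψ' > 0, and let θ_λ be defined as θ_λ = −(1/π) ∫_0^∞ (1/(1−ζ²)) log(ψ_λ(λ²ζ²)/ψ_λ(λ²)) dζ where ψ_λ(λ²ζ²) = (1 − ζ²)/(1 − ψ(λ²ζ²)/ψ(λ²)) extended continuously at ζ = 1 by ψ_λ(λ²) = ψ(λ²)/(λ²ψ'(λ²)). Then θ_λ ≤ π/2 − arcsin √(λ² ψ'(λ²)/ψ(λ²)) for all λ > 0. -/
open Real MeasureTheory

/-- A complete Bernstein function: `f(z) = c₁ + c₂ z + (1/π) ∫_{(0,∞)} z/(z+s) · m(ds)/s`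
with `c₁, c₂ ≥ 0` and `∫ min(s⁻¹, s⁻²) m(ds) < ∞`. -/
def IsCompleteBernstein (f : ℝ → ℝ) : Prop :=
  ∃ (c₁ c₂ : ℝ) (m : Measure ℝ), 0 ≤ c₁ ∧ 0 ≤ c₂ ∧
    (∫⁻ s in Set.Ioi (0:ℝ), ENNReal.ofReal (min s⁻¹ (s^2)⁻¹) ∂m) ≠ ⊤ ∧
    ∀ z > (0:ℝ), f z = c₁ + c₂ * z +
      (1/π) * ∫ s in Set.Ioi (0:ℝ), z/(z+s) * s⁻¹ ∂m

open Set


noncomputable def cFun (b ζ : ℝ) : ℝ := (1/(1-ζ^2)) * Real.log ((1+b*ζ^2)/(1+b))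

lemma log_ratio_abs_le {b ζ : ℝ} (hb : 0 ≤ b) :
    |Real.log ((1+b*ζ^2)/(1+b))| ≤ b * |ζ^2 - 1| := by
  have h1 : (0:ℝ) < 1 + b := by linarith
  have h2 : (0:ℝ) < 1 + b*ζ^2 := by nlinarith [sq_nonneg ζ]
  rcases le_total 1 (ζ^2) with h | h
  · have hr1 : (1:ℝ) ≤ (1+b*ζ^2)/(1+b) := by
      rw [le_div_iff₀ h1]; nlinarith
    rw [abs_of_nonneg (Real.log_nonneg hr1), abs_of_nonneg (by linarith)]
    have := Real.log_le_sub_one_of_pos (by positivity : (0:ℝ) < (1+b*ζ^2)/(1+b))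
    have h3 : (1+b*ζ^2)/(1+b) - 1 ≤ b*(ζ^2-1) := by
      rw [div_sub_one h1.ne', div_le_iff₀ h1]
      nlinarith [mul_nonneg (mul_nonneg hb (by linarith : (0:ℝ) ≤ ζ^2 - 1)) hb]
    linarith
  · have hr1 : (1+b*ζ^2)/(1+b) ≤ 1 := by
      rw [div_le_one h1]; nlinarith
    have hlog : Real.log ((1+b*ζ^2)/(1+b)) ≤ 0 := Real.log_nonpos (by positivity) hr1
    rw [abs_of_nonpos hlog, abs_of_nonpos (by linarith)]
    rw [← Real.log_inv, ← one_div, one_div_div]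
    have := Real.log_le_sub_one_of_pos (by positivity : (0:ℝ) < (1+b)/(1+b*ζ^2))
    have h3 : (1+b)/(1+b*ζ^2) - 1 ≤ b*(1-ζ^2) := by
      rw [div_sub_one h2.ne', div_le_iff₀ h2]; nlinarith [sq_nonneg ζ, mul_nonneg (mul_nonneg hb hb) (sq_nonneg ζ)]
    linarith

lemma cFun_abs_le {b ζ : ℝ} (hb : 0 ≤ b) : |cFun b ζ| ≤ b := by
  rcases eq_or_ne (ζ^2) 1 with h | h
  · simp [cFun, h, hb]
  · have h0 : (1:ℝ) - ζ^2 ≠ 0 := by intro hc; apply h; linarith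
    rw [cFun, abs_mul, abs_div, abs_one, div_mul_eq_mul_div, one_mul, div_le_iff₀ (abs_pos.2 h0)]
    calc |Real.log ((1+b*ζ^2)/(1+b))| ≤ b * |ζ^2-1| := log_ratio_abs_le hb
    _ = b * |1 - ζ^2| := by rw [abs_sub_comm]

lemma cFun_abs_le_tail {b ζ : ℝ} (hb : 0 ≤ b) (hζ : 2 ≤ ζ) :
    |cFun b ζ| ≤ (16/3) * ζ^(-(3:ℝ)/2) := by
  have hζ0 : (0:ℝ) < ζ := by linarith
  have h1 : (1:ℝ) < ζ^2 := by nlinarith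
  have h1b : (0:ℝ) < 1 + b := by linarith
  have h2 : (0:ℝ) < 1 + b*ζ^2 := by nlinarith
  have hr1 : (1:ℝ) ≤ (1+b*ζ^2)/(1+b) := by rw [le_div_iff₀ h1b]; nlinarith
  have hr2 : (1+b*ζ^2)/(1+b) ≤ ζ^2 := by rw [div_le_iff₀ h1b]; nlinarith
  have hlog : Real.log ((1+b*ζ^2)/(1+b)) ≤ 4 * Real.sqrt ζ := by
    have h3 : Real.log (Real.sqrt ζ) = Real.log ζ / 2 := Real.log_sqrt hζ0.le
    have h4 : Real.log (Real.sqrt ζ) ≤ Real.sqrt ζ - 1 :=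
      Real.log_le_sub_one_of_pos (Real.sqrt_pos.2 hζ0)
    calc Real.log ((1+b*ζ^2)/(1+b)) ≤ Real.log (ζ^2) := Real.log_le_log (by positivity) hr2
    _ = 2 * Real.log ζ := by rw [Real.log_pow]; push_cast; ring
    _ ≤ 4 * Real.sqrt ζ := by nlinarith [Real.sqrt_nonneg ζ]
  have hlognn : 0 ≤ Real.log ((1+b*ζ^2)/(1+b)) := Real.log_nonneg hr1
  have hden : (0:ℝ) < ζ^2 - 1 := by linarith
  have habs : |cFun b ζ| = Real.log ((1+b*ζ^2)/(1+b)) / (ζ^2-1) := by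
    rw [cFun, abs_mul, abs_div, abs_one, abs_of_nonneg hlognn,
      abs_of_neg (by linarith : (1:ℝ)-ζ^2 < 0)]
    rw [div_mul_eq_mul_div, one_mul]; ring_nf
  rw [habs]
  have h34 : (3:ℝ)/4 * ζ^2 ≤ ζ^2 - 1 := by nlinarith
  have hsq : Real.sqrt ζ = ζ^((1:ℝ)/2) := Real.sqrt_eq_rpow ζ
  calc Real.log ((1+b*ζ^2)/(1+b)) / (ζ^2-1) ≤ (4*Real.sqrt ζ) / ((3/4) * ζ^2) :=
        div_le_div₀ (by positivity) hlog (by positivity) h34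
  _ = (16/3) * (ζ^((1:ℝ)/2) / ζ^2) := by rw [hsq]; ring
  _ = (16/3) * ζ^(-(3:ℝ)/2) := by
        rw [← Real.rpow_natCast ζ 2, ← Real.rpow_sub hζ0]
        norm_num

lemma cFun_measurable (b : ℝ) : Measurable (cFun b) := by
  unfold cFun
  exact ((measurable_const.div ((measurable_const.sub (measurable_id.pow_const 2))))).mul
    (Real.measurable_log.comp ((measurable_const.add ((measurable_id.pow_const 2).const_mul b)).div measurable_const))

noncomputable def domFun (ζ : ℝ) : ℝ := if ζ ≤ 2 then (1:ℝ) else (16/3)*(max ζ 0)^(-(3:ℝ)/2)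

lemma domFun_nonneg (ζ : ℝ) : 0 ≤ domFun ζ := by
  unfold domFun; split
  · norm_num
  · exact mul_nonneg (by norm_num) (Real.rpow_nonneg (le_max_right _ _) _)

lemma domFun_measurable : Measurable domFun := by
  have h1 : Measurable fun ζ : ℝ => (16/3)*(max ζ 0)^(-(3:ℝ)/2) := by measurability
  exact Measurable.ite (measurableSet_le measurable_id measurable_const) measurable_const h1

lemma domFun_integrable : IntegrableOn domFun (Ioi (0:ℝ)) := by
  have h2 : Ioc (0:ℝ) 2 ∪ Ioi 2 = Ioi 0 := Ioc_union_Ioi_eq_Ioi (by norm_num : (0:ℝ) ≤ 2)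
  rw [← h2]
  apply IntegrableOn.union
  · apply IntegrableOn.congr_fun (f := fun _ => (1:ℝ)) ?_ ?_ measurableSet_Ioc
    · exact integrableOn_const (by simp [Real.volume_Ioc] : volume (Ioc (0:ℝ) 2) ≠ ⊤)
    · intro x hx
      simp [domFun, hx.2]
  · apply IntegrableOn.congr_fun (f := fun x : ℝ => (16/3)*x^(-(3:ℝ)/2)) ?_ ?_ measurableSet_Ioi
    · exact (integrableOn_Ioi_rpow_of_lt (by norm_num : (-(3:ℝ)/2) < -1) (by norm_num : (0:ℝ) < 2)).const_mul (16/3)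
    · intro x hx
      have hx2 : (2:ℝ) < x := hx
      simp only [domFun, if_neg (not_le.2 hx2), max_eq_left (by linarith : (0:ℝ) ≤ x)]

lemma cFun_le_dom {b ζ : ℝ} (hb : 0 ≤ b) (hb1 : b ≤ 1) (hζ : ζ ∈ Ioi (0:ℝ)) :
    |cFun b ζ| ≤ domFun ζ := by
  unfold domFun
  split
  · exact (cFun_abs_le hb).trans hb1
  · rename_i h
    rw [max_eq_left (by linarith [not_le.1 h] : (0:ℝ) ≤ ζ)]
    exact cFun_abs_le_tail hb (by linarith [not_le.1 h])

lemma cFun_integrableOn {b : ℝ} (hb : 0 ≤ b) : IntegrableOn (cFun b) (Ioi (0:ℝ)) := by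
  apply ((domFun_integrable.const_mul (max b 1)).mono' ((cFun_measurable b).aestronglyMeasurable))
  apply ae_of_all
  intro ζ
  rw [Real.norm_eq_abs]
  have hd := domFun_nonneg ζ
  rcases le_or_gt ζ 2 with h | h
  · calc |cFun b ζ| ≤ b := cFun_abs_le hb
    _ ≤ max b 1 * 1 := by rw [mul_one]; exact le_max_left _ _
    _ = max b 1 * domFun ζ := by rw [domFun, if_pos h]
  · calc |cFun b ζ| ≤ (16/3)*ζ^(-(3:ℝ)/2) := cFun_abs_le_tail hb (by linarith)
    _ = 1 * ((16/3)*(max ζ 0)^(-(3:ℝ)/2)) := by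
        rw [max_eq_left (by linarith : (0:ℝ) ≤ ζ), one_mul]
    _ ≤ max b 1 * ((16/3)*(max ζ 0)^(-(3:ℝ)/2)) := by
        apply mul_le_mul_of_nonneg_right (le_max_right _ _)
        exact mul_nonneg (by norm_num) (Real.rpow_nonneg (le_max_right _ _) _)
    _ = max b 1 * domFun ζ := by rw [domFun, if_neg (not_le.2 h)]

lemma arctanKernel_integral {c : ℝ} (hc : 0 < c) :
    ∫ ζ in Ioi (0:ℝ), (1+c*ζ^2)⁻¹ = π/(2*Real.sqrt c) := by
  have hs : 0 < Real.sqrt c := Real.sqrt_pos.2 hc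
  have h1 := integral_comp_mul_left_Ioi (fun x => (1+x^2)⁻¹) 0 hs
  simp only [mul_zero] at h1
  rw [integral_Ioi_inv_one_add_sq, arctan_zero, sub_zero, smul_eq_mul] at h1
  calc ∫ ζ in Ioi (0:ℝ), (1+c*ζ^2)⁻¹ = ∫ ζ in Ioi (0:ℝ), (1+(Real.sqrt c*ζ)^2)⁻¹ := by
        apply setIntegral_congr_fun measurableSet_Ioi
        intro ζ _
        simp only [mul_pow, Real.sq_sqrt hc.le]
  _ = (Real.sqrt c)⁻¹ * (π/2) := h1
  _ = π/(2*Real.sqrt c) := by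
        rw [eq_div_iff (by positivity)]
        field_simp

lemma arctanKernel_integrable {c : ℝ} (hc : 0 < c) :
    IntegrableOn (fun ζ => (1+c*ζ^2)⁻¹) (Ioi (0:ℝ)) := by
  apply ((integrable_inv_one_add_sq.const_mul (max 1 c⁻¹)).integrableOn).mono'
    (((measurable_const.add ((measurable_id.pow_const 2).const_mul c)).inv).aestronglyMeasurable)
  apply ae_of_all
  intro ζ
  have hz : (0:ℝ) < 1 + c*ζ^2 := by nlinarith [sq_nonneg ζ]
  change ‖(1+c*ζ^2)⁻¹‖ ≤ _
  rw [Real.norm_eq_abs, abs_of_nonneg (by positivity : (0:ℝ) ≤ (1+c*ζ^2)⁻¹)]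
  have hmin : 0 < min 1 c := lt_min one_pos hc
  have key : (1 + ζ^2) * (min 1 c) ≤ 1 + c*ζ^2 := by
    rcases le_total c 1 with h|h
    · rw [min_eq_right h]; nlinarith [sq_nonneg ζ]
    · rw [min_eq_left h]; nlinarith [sq_nonneg ζ]
  calc (1+c*ζ^2)⁻¹ ≤ ((1+ζ^2)*(min 1 c))⁻¹ := inv_anti₀ (by positivity) key
  _ = (min 1 c)⁻¹ * (1+ζ^2)⁻¹ := by rw [mul_inv]; ring
  _ ≤ max 1 c⁻¹ * (1+ζ^2)⁻¹ := by
      apply mul_le_mul_of_nonneg_right _ (by positivity)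
      rcases le_total c 1 with h|h
      · rw [min_eq_right h]; exact le_max_right _ _
      · rw [min_eq_left h, inv_one]; exact le_max_left _ _

noncomputable def Jfun (b : ℝ) : ℝ := ∫ ζ in Ioi (0:ℝ), cFun b ζ

lemma ae_ne_one : ∀ᵐ ζ ∂(volume.restrict (Ioi (0:ℝ))), ζ ≠ (1:ℝ) := by
  refine ae_iff.2 ?_
  have h1 : {ζ : ℝ | ¬ ζ ≠ 1} = {(1:ℝ)} := by ext x; simp
  rw [h1, Measure.restrict_apply (measurableSet_singleton 1)]
  exact measure_mono_null inter_subset_left (measure_singleton 1)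

lemma one_sub_sq_ne {ζ : ℝ} (hζ : 0 < ζ) (hζ1 : ζ ≠ 1) : (1:ℝ) - ζ^2 ≠ 0 := by
  intro hc
  rcases lt_or_gt_of_ne hζ1 with h | h
  · nlinarith
  · nlinarith

lemma cFun_hasDerivAt {x ζ : ℝ} (hx : 0 < x) (hζ : 0 < ζ) (hζ1 : ζ ≠ 1) :
    HasDerivAt (fun b => cFun b ζ) (-(1/((1+x*ζ^2)*(1+x)))) x := by
  have h2 : (0:ℝ) < 1 + x := by linarith
  have h3 : (0:ℝ) < 1 + x*ζ^2 := by nlinarith [sq_nonneg ζ]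
  have hz2 : (1:ℝ) - ζ^2 ≠ 0 := one_sub_sq_ne hζ hζ1
  have h1 : HasDerivAt (fun b : ℝ => 1 + b*ζ^2) (ζ^2) x := by
    simpa using ((hasDerivAt_id x).mul_const (ζ^2)).const_add 1
  have h2' : HasDerivAt (fun b : ℝ => 1 + b) 1 x := by
    simpa using (hasDerivAt_id x).const_add 1
  have hq : HasDerivAt (fun b : ℝ => (1+b*ζ^2)/(1+b))
      ((ζ^2*(1+x) - (1+x*ζ^2)*1)/(1+x)^2) x := h1.div h2' h2.ne'
  have hqx : (1+x*ζ^2)/(1+x) ≠ 0 := by positivity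
  have hlog := hq.log hqx
  have hfin := hlog.const_mul (1/(1-ζ^2))
  have heq : (1/(1-ζ^2)) * (((ζ^2*(1+x) - (1+x*ζ^2)*1)/(1+x)^2) / ((1+x*ζ^2)/(1+x)))
      = -(1/((1+x*ζ^2)*(1+x))) := by
    field_simp
    ring
  rw [heq] at hfin
  exact hfin

lemma Jfun_hasDerivAt {b : ℝ} (hb : 0 < b) :
    HasDerivAt Jfun (-(π/(2*Real.sqrt b*(1+b)))) b := by
  have hmain := hasDerivAt_integral_of_dominated_loc_of_deriv_le
    (F := fun x ζ => cFun x ζ) (F' := fun x ζ => -(1/((1+x*ζ^2)*(1+x))))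
    (x₀ := b) (s := Metric.ball b (b/2)) (μ := volume.restrict (Ioi (0:ℝ)))
    (bound := fun ζ => (1+(b/2)*ζ^2)⁻¹)
    (Metric.ball_mem_nhds b (by linarith))
    (Filter.Eventually.of_forall fun x => ((cFun_measurable x).aestronglyMeasurable))
    (cFun_integrableOn hb.le)
    (by measurability)
    ?_ (arctanKernel_integrable (by linarith : (0:ℝ) < b/2)) ?_
  · obtain ⟨-, hd⟩ := hmain
    have hd' : HasDerivAt Jfun (∫ ζ in Ioi (0:ℝ), -(1/((1+b*ζ^2)*(1+b)))) b := hd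
    have hval : ∫ ζ in Ioi (0:ℝ), -(1/((1+b*ζ^2)*(1+b))) = -(π/(2*Real.sqrt b*(1+b))) := by
      have h1 : ∀ ζ : ℝ, -(1/((1+b*ζ^2)*(1+b))) = (-(1+b)⁻¹) * (1+b*ζ^2)⁻¹ := by
        intro ζ; field_simp
      rw [setIntegral_congr_fun measurableSet_Ioi (fun ζ _ => h1 ζ), integral_const_mul,
        arctanKernel_integral hb]
      simp only [div_eq_mul_inv, mul_inv]
      ring
    rw [hval] at hd'
    exact hd'
  · -- bound
    filter_upwards [ae_restrict_mem measurableSet_Ioi] with ζ hζ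
    intro x hxball
    have hx : b/2 < x := by
      have := abs_lt.1 (mem_ball_iff_norm.1 hxball)
      linarith [this.1]
    have hζ0 : (0:ℝ) < ζ := hζ
    have h2 : (0:ℝ) < 1 + x := by linarith
    have h3 : (0:ℝ) < 1 + x*ζ^2 := by nlinarith [sq_nonneg ζ]
    have h4 : (0:ℝ) < 1 + (b/2)*ζ^2 := by nlinarith [sq_nonneg ζ]
    rw [norm_neg, Real.norm_eq_abs, abs_of_nonneg (by positivity)]
    rw [one_div]
    apply inv_anti₀ h4
    nlinarith [sq_nonneg ζ, mul_le_mul_of_nonneg_right hx.le (sq_nonneg ζ)]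
  · -- differentiability
    filter_upwards [ae_restrict_mem measurableSet_Ioi, ae_ne_one] with ζ hζ hζ1
    intro x hxball
    have hx : b/2 < x := by
      have := abs_lt.1 (mem_ball_iff_norm.1 hxball)
      linarith [this.1]
    exact cFun_hasDerivAt (by linarith) hζ hζ1

lemma Kfun_hasDerivAt {b : ℝ} (hb : 0 < b) :
    HasDerivAt (fun x => -π * Real.arctan (Real.sqrt x)) (-(π/(2*Real.sqrt b*(1+b)))) b := by
  have hs : 0 < Real.sqrt b := Real.sqrt_pos.2 hb
  have h1 : HasDerivAt Real.sqrt (1/(2*Real.sqrt b)) b := Real.hasDerivAt_sqrt hb.ne'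
  have h2 : HasDerivAt Real.arctan (1/(1+(Real.sqrt b)^2)) (Real.sqrt b) :=
    Real.hasDerivAt_arctan (Real.sqrt b)
  have h3 := (h2.comp b h1).const_mul (-π)
  have heq : -π * (1/(1+(Real.sqrt b)^2) * (1/(2*Real.sqrt b))) = -(π/(2*Real.sqrt b*(1+b))) := by
    rw [Real.sq_sqrt hb.le]
    simp only [one_div, div_eq_mul_inv, mul_inv]
    ring
  rw [heq] at h3
  exact h3

lemma Jfun_tendsto_zero : Filter.Tendsto Jfun (nhdsWithin 0 (Ioi 0)) (nhds 0) := by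
  have hmain := tendsto_integral_filter_of_dominated_convergence
    (μ := volume.restrict (Ioi (0:ℝ))) (l := nhdsWithin (0:ℝ) (Ioi 0))
    (F := fun b ζ => cFun b ζ) (f := fun _ => (0:ℝ)) domFun
    (Filter.Eventually.of_forall fun b => (cFun_measurable b).aestronglyMeasurable)
    ?_ domFun_integrable ?_
  · exact (by simpa using hmain : Filter.Tendsto (fun n => ∫ a in Ioi (0:ℝ), cFun n a) (nhdsWithin 0 (Ioi 0)) (nhds 0))
  · filter_upwards [Ioc_mem_nhdsGT_of_mem (by norm_num : (0:ℝ) ∈ Ico 0 1)] with b hb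
    filter_upwards [ae_restrict_mem measurableSet_Ioi] with ζ hζ
    rw [Real.norm_eq_abs]
    exact cFun_le_dom hb.1.le hb.2 hζ
  · apply ae_of_all
    intro ζ
    have hh1 : ∀ᶠ b in nhdsWithin (0:ℝ) (Ioi 0), ‖cFun b ζ‖ ≤ b := by
      filter_upwards [self_mem_nhdsWithin] with b hb
      simpa [Real.norm_eq_abs] using cFun_abs_le (le_of_lt (mem_Ioi.1 hb))
    have hh2 : Filter.Tendsto (fun b : ℝ => b) (nhdsWithin 0 (Ioi 0)) (nhds 0) :=
      Filter.tendsto_id.mono_right nhdsWithin_le_nhds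
    exact squeeze_zero_norm' hh1 hh2

lemma Jfun_eq {b : ℝ} (hb : 0 < b) : Jfun b = -π * Real.arctan (Real.sqrt b) := by
  have key : ∀ ε ∈ Ioo (0:ℝ) b, Jfun ε - (-π * Real.arctan (Real.sqrt ε))
      = Jfun b - (-π * Real.arctan (Real.sqrt b)) := by
    intro ε hε
    have hεb : ε ≤ b := hε.2.le
    have hpos : ∀ x ∈ uIcc ε b, 0 < x := by
      intro x hx
      rw [uIcc_of_le hεb] at hx
      linarith [hx.1, hε.1]
    have hcont : ContinuousOn (fun u => -(π/(2*Real.sqrt u*(1+u)))) (uIcc ε b) := by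
      apply ContinuousOn.neg
      apply ContinuousOn.div continuousOn_const
      · exact (continuousOn_const.mul (Real.continuous_sqrt.continuousOn)).mul
          (continuousOn_const.add continuousOn_id)
      · intro x hx
        have := hpos x hx
        have : 0 < Real.sqrt x := Real.sqrt_pos.2 this
        positivity
    have hint : IntervalIntegrable (fun u => -(π/(2*Real.sqrt u*(1+u)))) volume ε b :=
      hcont.intervalIntegrable
    have hJ := intervalIntegral.integral_eq_sub_of_hasDerivAt
      (f := Jfun) (f' := fun u => -(π/(2*Real.sqrt u*(1+u))))
      (fun x hx => Jfun_hasDerivAt (hpos x hx)) hint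
    have hK := intervalIntegral.integral_eq_sub_of_hasDerivAt
      (f := fun x => -π * Real.arctan (Real.sqrt x)) (f' := fun u => -(π/(2*Real.sqrt u*(1+u))))
      (fun x hx => Kfun_hasDerivAt (hpos x hx)) hint
    rw [hJ] at hK
    have hK' : Jfun b - Jfun ε = (-π * Real.arctan (Real.sqrt b)) - (-π * Real.arctan (Real.sqrt ε)) := hK
    linarith
  have h1 : Filter.Tendsto (fun ε => Jfun ε - (-π * Real.arctan (Real.sqrt ε)))
      (nhdsWithin 0 (Ioi 0)) (nhds 0) := by
    have h2 : Filter.Tendsto (fun ε : ℝ => -π * Real.arctan (Real.sqrt ε)) (nhdsWithin 0 (Ioi 0))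
        (nhds 0) := by
      have hc : Continuous fun ε : ℝ => -π * Real.arctan (Real.sqrt ε) :=
        (continuous_const.mul (Real.continuous_arctan.comp Real.continuous_sqrt))
      have := (hc.tendsto 0).mono_left (nhdsWithin_le_nhds (s := Ioi 0))
      simpa using this
    simpa using Jfun_tendsto_zero.sub h2
  have h3 : Filter.Tendsto (fun _ : ℝ => Jfun b - (-π * Real.arctan (Real.sqrt b)))
      (nhdsWithin 0 (Ioi 0)) (nhds (Jfun b - (-π * Real.arctan (Real.sqrt b)))) :=
    tendsto_const_nhds
  have h4 : Jfun b - (-π * Real.arctan (Real.sqrt b)) = 0 := by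
    apply tendsto_nhds_unique ?_ h1
    apply h3.congr'
    filter_upwards [Ioo_mem_nhdsGT_of_mem (⟨le_refl 0, hb⟩ : (0:ℝ) ∈ Ico 0 b)] with ε hε
    exact (key ε hε).symm
  linarith

lemma Jfun_eq' {b : ℝ} (hb : 0 ≤ b) : Jfun b = -π * Real.arctan (Real.sqrt b) := by
  rcases eq_or_lt_of_le hb with h | h
  · rw [← h]
    simp only [Jfun, cFun, Real.sqrt_zero, Real.arctan_zero, mul_zero]
    norm_num
  · exact Jfun_eq h




section Bernstein

lemma min_int {m : Measure ℝ}
    (hm : (∫⁻ s in Ioi (0:ℝ), ENNReal.ofReal (min s⁻¹ (s^2)⁻¹) ∂m) ≠ ⊤) :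
    IntegrableOn (fun s => min s⁻¹ (s^2)⁻¹) (Ioi 0) m := by
  constructor
  · exact ((measurable_inv.min ((measurable_id.pow_const 2).inv)).aestronglyMeasurable)
  · rw [hasFiniteIntegral_iff_ofReal ?_]
    · exact lt_top_iff_ne_top.2 hm
    · filter_upwards [ae_restrict_mem measurableSet_Ioi] with s hs
      have hs0 : (0:ℝ) < s := hs
      have h1 : (0:ℝ) ≤ s⁻¹ := by positivity
      have h2 : (0:ℝ) ≤ (s^2)⁻¹ := by positivity
      exact le_min h1 h2

lemma kernel_integrable {m : Measure ℝ}
    (hm : (∫⁻ s in Ioi (0:ℝ), ENNReal.ofReal (min s⁻¹ (s^2)⁻¹) ∂m) ≠ ⊤)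
    {f : ℝ → ℝ} (hf : Measurable f) {C : ℝ}
    (hb : ∀ s ∈ Ioi (0:ℝ), |f s| ≤ C * min s⁻¹ (s^2)⁻¹) :
    IntegrableOn f (Ioi 0) m := by
  apply (((min_int hm).const_mul C)).mono' hf.aestronglyMeasurable
  filter_upwards [ae_restrict_mem measurableSet_Ioi] with s hs
  rw [Real.norm_eq_abs]
  exact hb s hs

lemma phi_bound {z s : ℝ} (hz : 0 < z) (hs : 0 < s) :
    |z/(z+s) * s⁻¹| ≤ max 1 z * min s⁻¹ (s^2)⁻¹ := by
  have hzs : (0:ℝ) < z + s := by linarith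
  rw [abs_of_nonneg (by positivity)]
  rcases min_cases s⁻¹ ((s^2)⁻¹) with ⟨hmin, _⟩ | ⟨hmin, _⟩
  · rw [hmin]
    calc z/(z+s) * s⁻¹ ≤ 1 * s⁻¹ := by
          apply mul_le_mul_of_nonneg_right _ (by positivity)
          rw [div_le_one hzs]; linarith
    _ ≤ max 1 z * s⁻¹ := mul_le_mul_of_nonneg_right (le_max_left _ _) (by positivity)
  · rw [hmin]
    calc z/(z+s) * s⁻¹ ≤ (z/s) * s⁻¹ := by
          apply mul_le_mul_of_nonneg_right _ (by positivity)
          apply div_le_div_of_nonneg_left hz.le hs (by linarith)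
    _ = z * (s^2)⁻¹ := by rw [div_mul_eq_mul_div, div_eq_mul_inv, sq, mul_inv]; ring
    _ ≤ max 1 z * (s^2)⁻¹ := mul_le_mul_of_nonneg_right (le_max_right _ _) (by positivity)

lemma phi_integrable {m : Measure ℝ}
    (hm : (∫⁻ s in Ioi (0:ℝ), ENNReal.ofReal (min s⁻¹ (s^2)⁻¹) ∂m) ≠ ⊤)
    {z : ℝ} (hz : 0 < z) :
    IntegrableOn (fun s => z/(z+s) * s⁻¹) (Ioi 0) m := by
  apply kernel_integrable hm ((measurable_const.div (measurable_const.add measurable_id)).mul measurable_inv)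
  intro s hs
  exact phi_bound hz hs

lemma kappa_bound {σ τ s : ℝ} (hσ : 0 < σ) (hτ : 0 < τ) (hs : 0 < s) :
    |σ/((τ+s)*(σ+s))| ≤ max 1 σ * min s⁻¹ (s^2)⁻¹ := by
  have h1 : (0:ℝ) < τ + s := by linarith
  have h2 : (0:ℝ) < σ + s := by linarith
  rw [abs_of_nonneg (by positivity)]
  rcases min_cases s⁻¹ ((s^2)⁻¹) with ⟨hmin, _⟩ | ⟨hmin, _⟩
  · rw [hmin]
    calc σ/((τ+s)*(σ+s)) ≤ σ/(s * σ) := by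
          apply div_le_div_of_nonneg_left hσ.le (by positivity)
          have : s * σ ≤ s * (σ + s) := by nlinarith
          nlinarith
    _ = s⁻¹ := by field_simp
    _ ≤ max 1 σ * s⁻¹ := by nlinarith [le_max_left (1:ℝ) σ, inv_pos.2 hs]
  · rw [hmin]
    calc σ/((τ+s)*(σ+s)) ≤ σ/(s*s) := by
          apply div_le_div_of_nonneg_left hσ.le (by positivity)
          nlinarith
    _ = σ * (s^2)⁻¹ := by rw [div_eq_mul_inv, sq]
    _ ≤ max 1 σ * (s^2)⁻¹ := mul_le_mul_of_nonneg_right (le_max_right _ _) (by positivity)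

lemma kappa_integrable {m : Measure ℝ}
    (hm : (∫⁻ s in Ioi (0:ℝ), ENNReal.ofReal (min s⁻¹ (s^2)⁻¹) ∂m) ≠ ⊤)
    {σ τ : ℝ} (hσ : 0 < σ) (hτ : 0 < τ) :
    IntegrableOn (fun s => σ/((τ+s)*(σ+s))) (Ioi 0) m := by
  apply kernel_integrable hm (measurable_const.div
    ((measurable_const.add measurable_id).mul (measurable_const.add measurable_id)))
  intro s hs
  exact kappa_bound hσ hτ hs

/-- slope identity: `σ ((ψ τ - ψ σ)/(τ - σ)) = c₂ σ + (1/π) ∫ κ`. -/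
lemma slope_repr (ψ : ℝ → ℝ) (c₁ c₂ : ℝ) (m : Measure ℝ)
    (hm : (∫⁻ s in Ioi (0:ℝ), ENNReal.ofReal (min s⁻¹ (s^2)⁻¹) ∂m) ≠ ⊤)
    (hrep : ∀ z > (0:ℝ), ψ z = c₁ + c₂ * z + (1/π) * ∫ s in Ioi (0:ℝ), z/(z+s) * s⁻¹ ∂m)
    {σ τ : ℝ} (hσ : 0 < σ) (hτ : 0 < τ) (hτσ : τ ≠ σ) :
    σ * ((ψ τ - ψ σ)/(τ - σ)) = c₂ * σ + (1/π) * ∫ s in Ioi (0:ℝ), σ/((τ+s)*(σ+s)) ∂m := by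
  have hd : τ - σ ≠ 0 := sub_ne_zero.2 hτσ
  have hsub : ∫ s in Ioi (0:ℝ), (τ/(τ+s) * s⁻¹ - σ/(σ+s) * s⁻¹) ∂m
      = (∫ s in Ioi (0:ℝ), τ/(τ+s) * s⁻¹ ∂m) - ∫ s in Ioi (0:ℝ), σ/(σ+s) * s⁻¹ ∂m :=
    integral_sub (phi_integrable hm hτ) (phi_integrable hm hσ)
  have hptw : ∀ s ∈ Ioi (0:ℝ),
      σ/(τ-σ) * (τ/(τ+s) * s⁻¹ - σ/(σ+s) * s⁻¹) = σ/((τ+s)*(σ+s)) := by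
    intro s hs
    have hs0 : (0:ℝ) < s := hs
    have h1 : τ + s ≠ 0 := by positivity
    have h2 : σ + s ≠ 0 := by positivity
    field_simp
    ring
  have hκ : ∫ s in Ioi (0:ℝ), σ/((τ+s)*(σ+s)) ∂m
      = σ/(τ-σ) * ((∫ s in Ioi (0:ℝ), τ/(τ+s) * s⁻¹ ∂m) - ∫ s in Ioi (0:ℝ), σ/(σ+s) * s⁻¹ ∂m) := by
    rw [← hsub, ← integral_const_mul]
    exact (setIntegral_congr_fun measurableSet_Ioi (fun s hs => (hptw s hs).symm))
  rw [hrep τ hτ, hrep σ hσ, hκ]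
  field_simp
  ring
lemma ptwise_quad {σ t τ s x : ℝ} (hσ : 0<σ) (ht : 0<t) (hτ : 0<τ) (hs : 0<s)
    (hsign : (1-t)*(τ-σ) ≤ 0) :
    0 ≤ (σ*t)/((σ*t)+s) * s⁻¹ * x^2 - 2*x*(σ/(σ+s) * s⁻¹)
        + ((1-t)*(σ/((τ+s)*(σ+s))) + t*(σ/(σ+s) * s⁻¹))*t⁻¹ := by
  have h1 : (0:ℝ) < σ*t+s := by positivity
  have h2 : (0:ℝ) < σ+s := by positivity
  have h3 : (0:ℝ) < τ+s := by positivity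
  set A := (σ*t)/((σ*t)+s) * s⁻¹ with hA
  set B := σ/(σ+s) * s⁻¹ with hB
  set K := σ/((τ+s)*(σ+s)) with hK
  set K' := σ/((σ+s)^2) with hK'
  have hApos : 0 < A := by rw [hA]; positivity
  have hid : t*B^2 = A*((1-t)*K' + t*B) := by
    rw [hA, hB, hK']
    field_simp
    ring
  have hKK' : (1-t)*K' ≤ (1-t)*K := by
    have hdiff : K - K' = (σ-τ) * (σ/((τ+s)*(σ+s)^2)) := by
      rw [hK, hK']
      field_simp
      ring
    have h4 : 0 ≤ (1-t)*(σ-τ) := by nlinarith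
    have h5 : (0:ℝ) < σ/((τ+s)*(σ+s)^2) := by positivity
    nlinarith [mul_nonneg h4 h5.le]
  have hBA : B^2/A ≤ ((1-t)*K + t*B)*t⁻¹ := by
    have h6 : t*B^2 ≤ ((1-t)*K + t*B)*A := by
      nlinarith [mul_le_mul_of_nonneg_left hKK' hApos.le]
    have h7 := mul_le_mul_of_nonneg_left h6 (inv_pos.2 ht).le
    have h8 : t⁻¹*(t*B^2) = B^2 := by field_simp
    rw [div_le_iff₀ hApos]
    calc B^2 = t⁻¹*(t*B^2) := h8.symm
    _ ≤ t⁻¹*(((1-t)*K + t*B)*A) := h7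
    _ = ((1-t)*K + t*B)*t⁻¹*A := by ring
  have hsq : 0 ≤ (A*x - B)^2/A := by positivity
  have hexp : (A*x - B)^2/A = A*x^2 - 2*x*B + B^2/A := by
    field_simp
    ring
  have h9 : 0 ≤ A*x^2 - 2*x*B + B^2/A := hexp ▸ hsq
  linarith [hBA, h9]

lemma key_quad (ψ : ℝ → ℝ) (c₁ c₂ : ℝ) (m : Measure ℝ) (hc₁ : 0 ≤ c₁) (hc₂ : 0 ≤ c₂)
    (hm : (∫⁻ s in Ioi (0:ℝ), ENNReal.ofReal (min s⁻¹ (s^2)⁻¹) ∂m) ≠ ⊤)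
    (hrep : ∀ z > (0:ℝ), ψ z = c₁ + c₂ * z + (1/π) * ∫ s in Ioi (0:ℝ), z/(z+s) * s⁻¹ ∂m)
    {σ t τ : ℝ} (hσ : 0 < σ) (ht : 0 < t) (hτ : 0 < τ)
    (hsign : (1-t)*(τ-σ) ≤ 0) (hτσ : τ ≠ σ) (hG : 0 < ψ (σ*t)) :
    t * (ψ σ)^2 ≤ ψ (σ*t) * ((1-t)*(σ*((ψ τ - ψ σ)/(τ - σ))) + t * ψ σ) := by
  have hπ : (0:ℝ) < 1/π := div_pos one_pos Real.pi_pos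
  have hστ : 0 < σ*t := by positivity
  set x := ψ σ / ψ (σ*t) with hxdef
  have hIg : IntegrableOn (fun s => (σ*t)/((σ*t)+s) * s⁻¹) (Ioi 0) m := phi_integrable hm hστ
  have hIh : IntegrableOn (fun s => σ/(σ+s) * s⁻¹) (Ioi 0) m := phi_integrable hm hσ
  have hIκ : IntegrableOn (fun s => σ/((τ+s)*(σ+s))) (Ioi 0) m := kappa_integrable hm hσ hτ
  have hIq : 0 ≤ ∫ s in Ioi (0:ℝ), ((σ*t)/((σ*t)+s) * s⁻¹ * x^2 - 2*x*(σ/(σ+s) * s⁻¹)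
      + ((1-t)*(σ/((τ+s)*(σ+s))) + t*(σ/(σ+s) * s⁻¹))*t⁻¹) ∂m :=
    setIntegral_nonneg measurableSet_Ioi (fun s hs => ptwise_quad hσ ht hτ hs hsign)
  have e1 : Integrable (fun s => (σ*t)/((σ*t)+s) * s⁻¹ * x^2) (m.restrict (Ioi 0)) :=
    hIg.mul_const (x^2)
  have e2 : Integrable (fun s => 2*x*(σ/(σ+s) * s⁻¹)) (m.restrict (Ioi 0)) :=
    hIh.const_mul (2*x)
  have e12 : Integrable (fun s => (σ*t)/((σ*t)+s) * s⁻¹ * x^2 - 2*x*(σ/(σ+s) * s⁻¹))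
      (m.restrict (Ioi 0)) := e1.sub e2
  have e3a : Integrable (fun s => (1-t)*(σ/((τ+s)*(σ+s)))) (m.restrict (Ioi 0)) :=
    hIκ.const_mul (1-t)
  have e3b : Integrable (fun s => t*(σ/(σ+s) * s⁻¹)) (m.restrict (Ioi 0)) :=
    hIh.const_mul t
  have e3ab : Integrable (fun s => (1-t)*(σ/((τ+s)*(σ+s))) + t*(σ/(σ+s) * s⁻¹))
      (m.restrict (Ioi 0)) := e3a.add e3b
  have e3 : Integrable (fun s => ((1-t)*(σ/((τ+s)*(σ+s))) + t*(σ/(σ+s) * s⁻¹))*t⁻¹)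
      (m.restrict (Ioi 0)) := e3ab.mul_const t⁻¹
  have hsplit : ∫ s in Ioi (0:ℝ), ((σ*t)/((σ*t)+s) * s⁻¹ * x^2 - 2*x*(σ/(σ+s) * s⁻¹)
      + ((1-t)*(σ/((τ+s)*(σ+s))) + t*(σ/(σ+s) * s⁻¹))*t⁻¹) ∂m
      = (∫ s in Ioi (0:ℝ), (σ*t)/((σ*t)+s) * s⁻¹ ∂m) * x^2
        - 2*x*(∫ s in Ioi (0:ℝ), σ/(σ+s) * s⁻¹ ∂m)
        + ((1-t)*(∫ s in Ioi (0:ℝ), σ/((τ+s)*(σ+s)) ∂m)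
           + t*(∫ s in Ioi (0:ℝ), σ/(σ+s) * s⁻¹ ∂m))*t⁻¹ := by
    rw [integral_add e12 e3, integral_sub e1 e2,
      integral_mul_const (x^2) (fun s => (σ*t)/((σ*t)+s) * s⁻¹),
      integral_const_mul (2*x) (fun s => σ/(σ+s) * s⁻¹),
      integral_mul_const t⁻¹ (fun s => (1-t)*(σ/((τ+s)*(σ+s))) + t*(σ/(σ+s) * s⁻¹)),
      integral_add e3a e3b,
      integral_const_mul (1-t) (fun s => σ/((τ+s)*(σ+s))),
      integral_const_mul t (fun s => σ/(σ+s) * s⁻¹)]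
  rw [hsplit] at hIq
  have hF : 0 ≤ ψ (σ*t) * x^2 - 2*x*(ψ σ) + ((1-t)*(σ*((ψ τ - ψ σ)/(τ-σ))) + t*(ψ σ))*t⁻¹ := by
    rw [slope_repr ψ c₁ c₂ m hm hrep hσ hτ hτσ, hrep (σ*t) hστ, hrep σ hσ]
    have hcomb : (c₁ + c₂*(σ*t) + (1/π) * ∫ s in Ioi (0:ℝ), (σ*t)/((σ*t)+s) * s⁻¹ ∂m) * x^2
        - 2*x*(c₁ + c₂*σ + (1/π) * ∫ s in Ioi (0:ℝ), σ/(σ+s) * s⁻¹ ∂m)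
        + ((1-t)*(c₂*σ + (1/π) * ∫ s in Ioi (0:ℝ), σ/((τ+s)*(σ+s)) ∂m)
           + t*(c₁ + c₂*σ + (1/π) * ∫ s in Ioi (0:ℝ), σ/(σ+s) * s⁻¹ ∂m))*t⁻¹
        = c₁*(x-1)^2 + (c₂*σ*t⁻¹)*(t*x-1)^2
          + (1/π)*((∫ s in Ioi (0:ℝ), (σ*t)/((σ*t)+s) * s⁻¹ ∂m) * x^2
            - 2*x*(∫ s in Ioi (0:ℝ), σ/(σ+s) * s⁻¹ ∂m)
            + ((1-t)*(∫ s in Ioi (0:ℝ), σ/((τ+s)*(σ+s)) ∂m)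
               + t*(∫ s in Ioi (0:ℝ), σ/(σ+s) * s⁻¹ ∂m))*t⁻¹) := by
      field_simp
      ring
    rw [hcomb]
    have h1 : 0 ≤ c₁*(x-1)^2 := mul_nonneg hc₁ (sq_nonneg _)
    have h2 : 0 ≤ (c₂*σ*t⁻¹)*(t*x-1)^2 :=
      mul_nonneg (mul_nonneg (mul_nonneg hc₂ hσ.le) (inv_nonneg.2 ht.le)) (sq_nonneg _)
    have h3 := mul_nonneg hπ.le hIq
    linarith
  have hexp2 : ψ (σ*t) * x^2 - 2*x*(ψ σ) = -((ψ σ)^2 / ψ (σ*t)) := by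
    rw [hxdef]
    field_simp
    ring
  have h4 : (ψ σ)^2 / ψ (σ*t) ≤ ((1-t)*(σ*((ψ τ - ψ σ)/(τ-σ))) + t*(ψ σ))*t⁻¹ := by
    linarith [hF, hexp2]
  rw [div_le_iff₀ hG] at h4
  have h5 := mul_le_mul_of_nonneg_left h4 ht.le
  have h6 : t*(((1-t)*(σ*((ψ τ - ψ σ)/(τ-σ))) + t*(ψ σ))*t⁻¹*ψ (σ*t))
      = ψ (σ*t)*((1-t)*(σ*((ψ τ - ψ σ)/(τ-σ))) + t*(ψ σ)) := by
    field_simp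
  calc t*(ψ σ)^2 ≤ t*(((1-t)*(σ*((ψ τ - ψ σ)/(τ-σ))) + t*(ψ σ))*t⁻¹*ψ (σ*t)) := h5
  _ = ψ (σ*t)*((1-t)*(σ*((ψ τ - ψ σ)/(τ-σ))) + t*(ψ σ)) := h6

lemma key_ineq_deriv (ψ : ℝ → ℝ) (c₁ c₂ : ℝ) (m : Measure ℝ) (hc₁ : 0 ≤ c₁) (hc₂ : 0 ≤ c₂)
    (hm : (∫⁻ s in Ioi (0:ℝ), ENNReal.ofReal (min s⁻¹ (s^2)⁻¹) ∂m) ≠ ⊤)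
    (hrep : ∀ z > (0:ℝ), ψ z = c₁ + c₂ * z + (1/π) * ∫ s in Ioi (0:ℝ), z/(z+s) * s⁻¹ ∂m)
    {σ t : ℝ} (hσ : 0 < σ) (ht : 0 < t) (hG : 0 < ψ (σ*t))
    (hd : HasDerivAt ψ (deriv ψ σ) σ) :
    t * (ψ σ)^2 ≤ ψ (σ*t) * ((1-t)*(σ*deriv ψ σ) + t * ψ σ) := by
  have hslope0 : Filter.Tendsto (fun τ => (ψ τ - ψ σ)/(τ - σ)) (nhdsWithin σ {σ}ᶜ)
      (nhds (deriv ψ σ)) := by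
    have h1 := hasDerivAt_iff_tendsto_slope.1 hd
    apply h1.congr
    intro τ
    rw [slope_def_field]
  rcases lt_trichotomy t 1 with hlt | heq | hgt
  · have hslope : Filter.Tendsto (fun τ => (ψ τ - ψ σ)/(τ - σ)) (nhdsWithin σ (Iio σ))
        (nhds (deriv ψ σ)) :=
      hslope0.mono_left (nhdsWithin_mono σ (fun y hy => ne_of_lt hy))
    have htend : Filter.Tendsto
        (fun τ => ψ (σ*t) * ((1-t)*(σ*((ψ τ - ψ σ)/(τ - σ))) + t * ψ σ))
        (nhdsWithin σ (Iio σ)) (nhds (ψ (σ*t) * ((1-t)*(σ*deriv ψ σ) + t * ψ σ))) :=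
      (((hslope.const_mul σ).const_mul (1-t)).add_const (t * ψ σ)).const_mul (ψ (σ*t))
    apply ge_of_tendsto htend
    filter_upwards [Ioo_mem_nhdsLT_of_mem (⟨half_lt_self hσ, le_refl σ⟩ : σ ∈ Ioc (σ/2) σ)]
      with τ hτ
    exact key_quad ψ c₁ c₂ m hc₁ hc₂ hm hrep hσ ht
      (by linarith [hτ.1, half_pos hσ]) (by nlinarith [hτ.2]) (ne_of_lt hτ.2) hG
  · rw [heq]
    have : σ*(1:ℝ) = σ := mul_one σ
    rw [this]
    rw [pow_two]
    nlinarith [hG]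
  · have hslope : Filter.Tendsto (fun τ => (ψ τ - ψ σ)/(τ - σ)) (nhdsWithin σ (Ioi σ))
        (nhds (deriv ψ σ)) :=
      hslope0.mono_left (nhdsWithin_mono σ (fun y hy => ne_of_gt hy))
    have htend : Filter.Tendsto
        (fun τ => ψ (σ*t) * ((1-t)*(σ*((ψ τ - ψ σ)/(τ - σ))) + t * ψ σ))
        (nhdsWithin σ (Ioi σ)) (nhds (ψ (σ*t) * ((1-t)*(σ*deriv ψ σ) + t * ψ σ))) :=
      (((hslope.const_mul σ).const_mul (1-t)).add_const (t * ψ σ)).const_mul (ψ (σ*t))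
    apply ge_of_tendsto htend
    filter_upwards [Ioo_mem_nhdsGT_of_mem (⟨le_refl σ, lt_add_one σ⟩ : σ ∈ Ico σ (σ+1))]
      with τ hτ
    exact key_quad ψ c₁ c₂ m hc₁ hc₂ hm hrep hσ ht
      (by linarith [hτ.1]) (by nlinarith [hτ.1]) (ne_of_gt hτ.1) hG

lemma sigmaD_le (ψ : ℝ → ℝ) (c₁ c₂ : ℝ) (m : Measure ℝ) (hc₁ : 0 ≤ c₁) (hc₂ : 0 ≤ c₂)
    (hm : (∫⁻ s in Ioi (0:ℝ), ENNReal.ofReal (min s⁻¹ (s^2)⁻¹) ∂m) ≠ ⊤)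
    (hrep : ∀ z > (0:ℝ), ψ z = c₁ + c₂ * z + (1/π) * ∫ s in Ioi (0:ℝ), z/(z+s) * s⁻¹ ∂m)
    {σ : ℝ} (hσ : 0 < σ) (hd : HasDerivAt ψ (deriv ψ σ) σ) :
    σ * deriv ψ σ ≤ ψ σ := by
  have hπ : (0:ℝ) < 1/π := div_pos one_pos Real.pi_pos
  have hslope0 : Filter.Tendsto (fun τ => (ψ τ - ψ σ)/(τ - σ)) (nhdsWithin σ {σ}ᶜ)
      (nhds (deriv ψ σ)) := by
    have h1 := hasDerivAt_iff_tendsto_slope.1 hd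
    apply h1.congr
    intro τ
    rw [slope_def_field]
  have hslope : Filter.Tendsto (fun τ => σ*((ψ τ - ψ σ)/(τ - σ))) (nhdsWithin σ (Ioi σ))
      (nhds (σ * deriv ψ σ)) :=
    (hslope0.mono_left (nhdsWithin_mono σ (fun y hy => ne_of_gt hy))).const_mul σ
  apply le_of_tendsto hslope
  filter_upwards [Ioo_mem_nhdsGT_of_mem (⟨le_refl σ, lt_add_one σ⟩ : σ ∈ Ico σ (σ+1))]
    with τ hτ
  have hτ0 : 0 < τ := by linarith [hτ.1]
  rw [slope_repr ψ c₁ c₂ m hm hrep hσ hτ0 (ne_of_gt hτ.1), hrep σ hσ]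
  have hIh : IntegrableOn (fun s => σ/(σ+s) * s⁻¹) (Ioi 0) m := phi_integrable hm hσ
  have hIκ : IntegrableOn (fun s => σ/((τ+s)*(σ+s))) (Ioi 0) m := kappa_integrable hm hσ hτ0
  have hint : (∫ s in Ioi (0:ℝ), σ/((τ+s)*(σ+s)) ∂m) ≤ ∫ s in Ioi (0:ℝ), σ/(σ+s) * s⁻¹ ∂m := by
    apply setIntegral_mono_on hIκ hIh measurableSet_Ioi
    intro s hs
    have hs0 : (0:ℝ) < s := hs
    rw [div_mul_eq_mul_div, div_le_div_iff₀ (by positivity) (by positivity)]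
    have h6 : (1:ℝ) ≤ s⁻¹*(τ+s) := by
      rw [inv_mul_eq_div, le_div_iff₀ hs0]
      linarith
    nlinarith [mul_pos hσ (show (0:ℝ) < σ+s by linarith), h6]
  have h3 := mul_le_mul_of_nonneg_left hint hπ.le
  linarith

end Bernstein

lemma my_arctan_nonneg {x : ℝ} (hx : 0 ≤ x) : 0 ≤ Real.arctan x := by
  rw [← Real.arctan_zero]
  exact Real.arctan_strictMono.monotone hx

set_option maxHeartbeats 1600000 in
theorem stmt18 (ψ : ℝ → ℝ) (hcb : IsCompleteBernstein ψ)
    (hsmooth : ContDiffOn ℝ (⊤ : ℕ∞) ψ (Set.Ioi 0))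
    (hpos : ∀ ξ > (0:ℝ), 0 < deriv ψ ξ)
    (lam : ℝ) (hlam : 0 < lam) :
    -(1/π) * ∫ ζ in Set.Ioi (0:ℝ),
        (1/(1-ζ^2)) * Real.log (psiLam ψ lam (lam^2*ζ^2) /
          (ψ (lam^2) / (lam^2 * deriv ψ (lam^2))))
      ≤ π/2 - Real.arcsin (Real.sqrt (lam^2 * deriv ψ (lam^2) / ψ (lam^2))) := by
  obtain ⟨c₁, c₂, m, hc₁, hc₂, hm, hrep⟩ := hcb
  have hσ : (0:ℝ) < lam^2 := by positivity
  have hπ : (0:ℝ) < π := Real.pi_pos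
  have hdiffAt : DifferentiableAt ℝ ψ (lam^2) :=
    ((hsmooth.contDiffAt (isOpen_Ioi.mem_nhds hσ)).differentiableAt (by simp))
  have hd : HasDerivAt ψ (deriv ψ (lam^2)) (lam^2) := hdiffAt.hasDerivAt
  have hD : 0 < deriv ψ (lam^2) := hpos (lam^2) hσ
  have hmono : StrictMonoOn ψ (Ioi 0) := by
    apply strictMonoOn_of_deriv_pos (convex_Ioi 0) (hsmooth.continuousOn)
    intro x hx
    rw [interior_Ioi] at hx
    exact hpos x hx
  have hnonneg : ∀ x : ℝ, 0 < x → 0 ≤ ψ x := by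
    intro x hx
    rw [hrep x hx]
    have h1 : 0 ≤ ∫ s in Ioi (0:ℝ), x/(x+s)*s⁻¹ ∂m := by
      apply setIntegral_nonneg measurableSet_Ioi
      intro s hs
      have hs0 : (0:ℝ) < s := hs
      have hxs : (0:ℝ) < x + s := by linarith
      exact mul_nonneg (div_nonneg hx.le hxs.le) (inv_nonneg.2 hs0.le)
    have h2 : 0 ≤ (1/π) * ∫ s in Ioi (0:ℝ), x/(x+s)*s⁻¹ ∂m :=
      mul_nonneg (by positivity) h1
    nlinarith [mul_nonneg hc₂ hx.le]
  have hψpos : ∀ x : ℝ, 0 < x → 0 < ψ x := by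
    intro x hx
    have h1 : ψ (x/2) < ψ x := hmono (mem_Ioi.2 (by linarith)) (mem_Ioi.2 hx) (by linarith)
    linarith [hnonneg (x/2) (by linarith)]
  have hP : 0 < ψ (lam^2) := hψpos _ hσ
  have hσD : 0 < lam^2 * deriv ψ (lam^2) := mul_pos hσ hD
  have hσDP : lam^2 * deriv ψ (lam^2) ≤ ψ (lam^2) :=
    sigmaD_le ψ c₁ c₂ m hc₁ hc₂ hm hrep hσ hd
  set b := ψ (lam^2)/(lam^2 * deriv ψ (lam^2)) - 1 with hbdef
  have hb : 0 ≤ b := by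
    rw [hbdef, sub_nonneg, le_div_iff₀ hσD]
    linarith
  -- pointwise comparison
  have hcomp : ∀ ζ : ℝ, ζ ∈ Ioi (0:ℝ) → ζ ≠ 1 →
      cFun b ζ ≤ (1/(1-ζ^2)) * Real.log (psiLam ψ lam (lam^2*ζ^2) /
        (ψ (lam^2) / (lam^2 * deriv ψ (lam^2)))) := by
    intro ζ hζ hζ1
    have hζ0 : (0:ℝ) < ζ := hζ
    have ht : (0:ℝ) < ζ^2 := by positivity
    have hGpos : 0 < ψ (lam^2*ζ^2) := hψpos _ (by positivity)
    have key := key_ineq_deriv ψ c₁ c₂ m hc₁ hc₂ hm hrep hσ ht hGpos hd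
    set W := (1-ζ^2)*(lam^2 * deriv ψ (lam^2)) + ζ^2*ψ (lam^2) with hWdef
    have hkey : ζ^2 * ψ (lam^2)^2 ≤ ψ (lam^2*ζ^2) * W := by
      calc ζ^2 * ψ (lam^2)^2 ≤ ψ (lam^2*ζ^2) * ((1-ζ^2)*(lam^2*deriv ψ (lam^2)) + ζ^2*ψ (lam^2)) := key
      _ = ψ (lam^2*ζ^2) * W := by rw [hWdef]
    have hW : 0 < W := by
      have h1 : ζ^2*(lam^2*deriv ψ (lam^2)) ≤ ζ^2*ψ (lam^2) :=
        mul_le_mul_of_nonneg_left hσDP (sq_nonneg ζ)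
      nlinarith [hσD]
    have hpsiLam : psiLam ψ lam (lam^2*ζ^2)
        = (1-ζ^2)/(1 - ψ (lam^2*ζ^2)/ψ (lam^2)) := by
      unfold psiLam
      rw [mul_comm (lam^2) (ζ^2), mul_div_assoc, div_self hσ.ne', mul_one]
    have hratio : (1+b*ζ^2)/(1+b) = W/ψ (lam^2) := by
      rw [hbdef, hWdef]
      field_simp [hσD.ne', hP.ne']
      ring
    have hsq1 : 1 - ζ^2 ≠ 0 := one_sub_sq_ne hζ0 hζ1
    rcases lt_or_gt_of_ne hζ1 with hlt | hgt
    · -- ζ < 1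
      have ht1 : ζ^2 < 1 := by nlinarith
      have hGP : ψ (lam^2*ζ^2) < ψ (lam^2) :=
        hmono (mem_Ioi.2 (by positivity)) (mem_Ioi.2 hσ) (by nlinarith)
      have hPG : 0 < ψ (lam^2) - ψ (lam^2*ζ^2) := by linarith
      have hden : (0:ℝ) < 1 - ψ (lam^2*ζ^2)/ψ (lam^2) := by
        rw [sub_pos, div_lt_one hP]
        exact hGP
      have hpA : psiLam ψ lam (lam^2*ζ^2) / (ψ (lam^2) / (lam^2 * deriv ψ (lam^2)))
          = (1-ζ^2)*(lam^2 * deriv ψ (lam^2))/(ψ (lam^2) - ψ (lam^2*ζ^2)) := by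
        rw [hpsiLam]
        field_simp [hP.ne', hσD.ne', hden.ne', hPG.ne']
      have hWple : W/ψ (lam^2) ≤ (1-ζ^2)*(lam^2 * deriv ψ (lam^2))/(ψ (lam^2) - ψ (lam^2*ζ^2)) := by
        rw [div_le_div_iff₀ hP hPG]
        have hW' : (1-ζ^2)*(lam^2 * deriv ψ (lam^2)) = W - ζ^2*ψ (lam^2) := by
          rw [hWdef]; ring
        rw [hW']
        nlinarith [hkey]
      have h0WP : 0 < W/ψ (lam^2) := div_pos hW hP
      have hlog : Real.log (W/ψ (lam^2))
          ≤ Real.log ((1-ζ^2)*(lam^2 * deriv ψ (lam^2))/(ψ (lam^2) - ψ (lam^2*ζ^2))) :=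
        Real.log_le_log h0WP hWple
      have hfac : (0:ℝ) ≤ 1/(1-ζ^2) := by
        apply le_of_lt
        apply div_pos one_pos
        linarith
      calc cFun b ζ = (1/(1-ζ^2)) * Real.log ((1+b*ζ^2)/(1+b)) := rfl
      _ = (1/(1-ζ^2)) * Real.log (W/ψ (lam^2)) := by rw [hratio]
      _ ≤ (1/(1-ζ^2)) * Real.log ((1-ζ^2)*(lam^2 * deriv ψ (lam^2))/(ψ (lam^2) - ψ (lam^2*ζ^2))) :=
          mul_le_mul_of_nonneg_left hlog hfac
      _ = (1/(1-ζ^2)) * Real.log (psiLam ψ lam (lam^2*ζ^2) /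
            (ψ (lam^2) / (lam^2 * deriv ψ (lam^2)))) := by rw [hpA]
    · -- ζ > 1
      have ht1 : 1 < ζ^2 := by nlinarith
      have hGP : ψ (lam^2) < ψ (lam^2*ζ^2) :=
        hmono (mem_Ioi.2 hσ) (mem_Ioi.2 (by positivity)) (by nlinarith)
      have hPG : 0 < ψ (lam^2*ζ^2) - ψ (lam^2) := by linarith
      have hden : 1 - ψ (lam^2*ζ^2)/ψ (lam^2) ≠ 0 := by
        rw [sub_ne_zero]
        intro hc
        rw [eq_div_iff hP.ne'] at hc
        rw [one_mul] at hc
        linarith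
      have hpA : psiLam ψ lam (lam^2*ζ^2) / (ψ (lam^2) / (lam^2 * deriv ψ (lam^2)))
          = (ζ^2-1)*(lam^2 * deriv ψ (lam^2))/(ψ (lam^2*ζ^2) - ψ (lam^2)) := by
        have hPGne : ψ (lam^2) - ψ (lam^2*ζ^2) ≠ 0 := sub_ne_zero.2 (ne_of_lt hGP)
        have hpA0 : psiLam ψ lam (lam^2*ζ^2) / (ψ (lam^2) / (lam^2 * deriv ψ (lam^2)))
            = (1-ζ^2)*(lam^2 * deriv ψ (lam^2))/(ψ (lam^2) - ψ (lam^2*ζ^2)) := by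
          rw [hpsiLam]
          field_simp [hP.ne', hσD.ne', hden, hPGne]
        rw [hpA0, div_eq_div_iff hPGne hPG.ne']
        ring
      have hWple : (ζ^2-1)*(lam^2 * deriv ψ (lam^2))/(ψ (lam^2*ζ^2) - ψ (lam^2)) ≤ W/ψ (lam^2) := by
        rw [div_le_div_iff₀ hPG hP]
        have hW' : (ζ^2-1)*(lam^2 * deriv ψ (lam^2)) = ζ^2*ψ (lam^2) - W := by
          rw [hWdef]; ring
        rw [hW']
        nlinarith [hkey]
      have hppos : 0 < (ζ^2-1)*(lam^2 * deriv ψ (lam^2))/(ψ (lam^2*ζ^2) - ψ (lam^2)) := by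
        apply div_pos _ hPG
        apply mul_pos (by linarith) hσD
      have hlog : Real.log ((ζ^2-1)*(lam^2 * deriv ψ (lam^2))/(ψ (lam^2*ζ^2) - ψ (lam^2)))
          ≤ Real.log (W/ψ (lam^2)) :=
        Real.log_le_log hppos hWple
      have hfac : 1/(1-ζ^2) ≤ (0:ℝ) := by
        apply le_of_lt
        apply div_neg_of_pos_of_neg one_pos
        linarith
      calc cFun b ζ = (1/(1-ζ^2)) * Real.log ((1+b*ζ^2)/(1+b)) := rfl
      _ = (1/(1-ζ^2)) * Real.log (W/ψ (lam^2)) := by rw [hratio]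
      _ ≤ (1/(1-ζ^2)) * Real.log ((ζ^2-1)*(lam^2 * deriv ψ (lam^2))/(ψ (lam^2*ζ^2) - ψ (lam^2))) :=
          mul_le_mul_of_nonpos_left hlog hfac
      _ = (1/(1-ζ^2)) * Real.log (psiLam ψ lam (lam^2*ζ^2) /
            (ψ (lam^2) / (lam^2 * deriv ψ (lam^2)))) := by rw [hpA]
  -- assemble
  have hae : ∀ᵐ ζ ∂(volume.restrict (Ioi (0:ℝ))), cFun b ζ ≤
      (1/(1-ζ^2)) * Real.log (psiLam ψ lam (lam^2*ζ^2) /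
        (ψ (lam^2) / (lam^2 * deriv ψ (lam^2)))) := by
    filter_upwards [ae_restrict_mem measurableSet_Ioi, ae_ne_one] with ζ h1 h2
    exact hcomp ζ h1 h2
  have hJ : ∫ ζ in Ioi (0:ℝ), cFun b ζ = -π * Real.arctan (Real.sqrt b) := Jfun_eq' hb
  have hlow : -π * Real.arctan (Real.sqrt b) ≤ ∫ ζ in Ioi (0:ℝ),
      (1/(1-ζ^2)) * Real.log (psiLam ψ lam (lam^2*ζ^2) /
        (ψ (lam^2) / (lam^2 * deriv ψ (lam^2)))) := by
    by_cases hint : Integrable (fun ζ => (1/(1-ζ^2)) * Real.log (psiLam ψ lam (lam^2*ζ^2) /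
        (ψ (lam^2) / (lam^2 * deriv ψ (lam^2))))) (volume.restrict (Ioi 0))
    · rw [← hJ]
      exact integral_mono_ae (cFun_integrableOn hb) hint hae
    · rw [integral_undef hint]
      have h1 : 0 ≤ Real.arctan (Real.sqrt b) := my_arctan_nonneg (Real.sqrt_nonneg b)
      nlinarith [mul_nonneg hπ.le h1]
  have hRHS : π/2 - Real.arcsin (Real.sqrt (lam^2 * deriv ψ (lam^2) / ψ (lam^2)))
      = Real.arctan (Real.sqrt b) := by
    have h1 : lam^2 * deriv ψ (lam^2) / ψ (lam^2) = (1+b)⁻¹ := by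
      rw [hbdef]
      field_simp
      rw [add_sub_cancel, div_self hP.ne']
    have h3 : Real.cos (Real.arctan (Real.sqrt b)) = 1/Real.sqrt (1+(Real.sqrt b)^2) :=
      Real.cos_arctan _
    rw [Real.sq_sqrt hb] at h3
    have h4 : Real.arcsin (Real.sqrt (lam^2 * deriv ψ (lam^2) / ψ (lam^2)))
        = π/2 - Real.arctan (Real.sqrt b) := by
      rw [h1, Real.sqrt_inv, ← one_div, ← h3, ← Real.sin_pi_div_two_sub]
      apply Real.arcsin_sin
      · have h5 := Real.arctan_lt_pi_div_two (Real.sqrt b)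
        linarith
      · linarith [my_arctan_nonneg (Real.sqrt_nonneg b)]
    rw [h4]
    ring
  rw [hRHS]
  have h5 := mul_le_mul_of_nonpos_left hlow (neg_nonpos.2 (le_of_lt (div_pos one_pos hπ)))
  have h6 : -(1/π)*(-π*Real.arctan (Real.sqrt b)) = Real.arctan (Real.sqrt b) := by
    field_simp
  linarith [h5, h6]
end
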